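/- arXiv:1608.08185 — 9 statements merged into one kernel-verified Lean document; each statement's English description precedes it below -/
import Mathlib

section
/- If B = (X, Y, R) is a finite bipartite graph, then its matching number equals |X| minus the supremum over all subsets S ⊆ X of |S| − |N(S)|, where N(S) denotes the set of neighbors of S in Y. -/
/-!
A matching meets `S` in at most `|N(S)|` vertices and `X \ S` in at most `|X| - |S|`, so it has
at most `|X| - (|S| - |N(S)|)` edges. Conversely, let `d` be the largest deficiency
`|S| - |N(S)|` and add `d` new vertices to `Y`, each adjacent to all of `X`. The enlarged graph
satisfies Hall's condition, so it has an `X`-saturating matching; at most `d` of its edges end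
in new vertices, and the others form a matching of the original graph with at least
`|X| - d` edges.
-/

open Finset Function

namespace BipartiteDeficiency

variable {X Y : Type*} [Fintype Y]

def neighbors (R : X → Y → Prop) [DecidableRel R] (S : Finset X) : Finset Y :=
  {y | ∃ x ∈ S, R x y}

def deficiency (R : X → Y → Prop) [DecidableRel R] (S : Finset X) : ℕ :=
  #S - #(neighbors R S)

def augment (R : X → Y → Prop) (d : ℕ) (x : X) : Y ⊕ Fin d → Prop :=
  Sum.elim (R x) fun _ ↦ True

variable {R : X → Y → Prop} [DecidableRel R]

theorem natCard_setOf_eq_card_neighbors (S : Finset X) :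
    Nat.card {y : Y | ∃ x ∈ S, R x y} = #(neighbors R S) := by
  simp [neighbors]

theorem card_add_deficiency_le_card [Fintype X] {D : Finset X} {φ : X → Y}
    (hinj : Set.InjOn φ D) (hR : ∀ x ∈ D, R x (φ x)) (S : Finset X) :
    #D + deficiency R S ≤ Fintype.card X := by
  classical
  have hin : #(D ∩ S) ≤ #(neighbors R S) :=
    card_le_card_of_injOn φ
      (fun x hx ↦ by
        simp only [coe_inter, Set.mem_inter_iff, mem_coe] at hx
        simpa [neighbors] using ⟨x, hx.2, hR x hx.1⟩)
      (hinj.mono (by simp))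
  have hout : #(D \ S) ≤ #Sᶜ := card_le_card fun x hx ↦ by simp [(mem_sdiff.mp hx).2]
  have hsplit := card_inter_add_card_sdiff D S
  have hinS := card_le_card (inter_subset_right (s₁ := D) (s₂ := S))
  have hS := card_le_univ S
  rw [card_compl] at hout
  unfold deficiency
  omega

theorem exists_injective_augment_of_deficiency_le {d : ℕ} (h : ∀ S, deficiency R S ≤ d) :
    ∃ f : X → Y ⊕ Fin d, Injective f ∧ ∀ x, augment R d x (f x) := by
  classical
  refine (Fintype.all_card_le_filter_rel_iff_exists_injective (augment R d)).mp fun S ↦ ?_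
  obtain rfl | ⟨x₀, hx₀⟩ := S.eq_empty_or_nonempty
  · simp
  have hsub : (neighbors R S).disjSum univ ⊆ ({z | ∃ x ∈ S, augment R d x z} : Finset _) := by
    rintro (y | i) hz <;> rw [mem_filter]
    · simpa [neighbors, augment] using hz
    · simpa [augment] using ⟨x₀, hx₀⟩
  have hcard := card_le_card hsub
  have hS := h S
  rw [card_disjSum, card_univ, Fintype.card_fin] at hcard
  unfold deficiency at *
  omega

theorem exists_matching_card_ge_of_deficiency_le [Fintype X] [Nonempty Y] {d : ℕ}
    (h : ∀ S, deficiency R S ≤ d) :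
    ∃ (D : Finset X) (φ : X → Y), Set.InjOn φ D ∧ (∀ x ∈ D, R x (φ x)) ∧
      Fintype.card X - d ≤ #D := by
  classical
  obtain ⟨f, hinj, hf⟩ := exists_injective_augment_of_deficiency_le h
  let φ : X → Y := fun x ↦ Sum.elim id (fun _ ↦ Classical.arbitrary Y) (f x)
  let D : Finset X := {x | (f x).isLeft}
  have hfD : ∀ x ∈ D, f x = Sum.inl (φ x) := fun x hx ↦ by
    obtain ⟨y, hy⟩ := Sum.isLeft_iff.mp (mem_filter.mp hx).2
    simp [φ, hy]
  have hDc : #Dᶜ ≤ d := by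
    have := card_le_card_of_injOn f (s := Dᶜ) (t := univ.map Embedding.inr)
      (fun x hx ↦ by
        obtain ⟨i, hi⟩ := Sum.isRight_iff.mp (by simpa [D] using hx)
        simp [hi])
      hinj.injOn
    simpa using this
  refine ⟨D, φ, fun a ha b hb hab ↦ hinj ?_, fun x hx ↦ ?_, ?_⟩
  · rw [hfD a ha, hfD b hb, hab]
  · simpa [augment, hfD x hx] using hf x
  · rw [card_compl] at hDc
    omega

end BipartiteDeficiency

open BipartiteDeficiency

/-- Quantitative Hall theorem: the matching number of a finite bipartite graph `(X, Y, R)`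
equals `|X| - sup_{S ⊆ X} (|S| - |N(S)|)`. -/
theorem stmt_1 {X Y : Type*} [Fintype X] [Fintype Y] (R : X → Y → Prop) :
    sSup {n : ℕ | ∃ (D : Finset X) (φ : X → Y), Set.InjOn φ ↑D ∧
        (∀ x ∈ D, R x (φ x)) ∧ D.card = n}
      = Fintype.card X -
        sSup {k : ℕ | ∃ S : Finset X,
          k = S.card - Nat.card {y : Y | ∃ x ∈ S, R x y}} := by
  classical
  have hK : {k : ℕ | ∃ S : Finset X, k = S.card - Nat.card {y : Y | ∃ x ∈ S, R x y}} =
      Set.range (deficiency R) := by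
    ext k
    simp only [Set.mem_ofPred_eq, Set.mem_range, natCard_setOf_eq_card_neighbors, deficiency,
      eq_comm]
  rw [hK]
  have hbdd := (Set.finite_range (deficiency R)).bddAbove
  obtain ⟨S₀, hS₀⟩ := Nat.sSup_mem (Set.range_nonempty _) hbdd
  have hmax : ∀ S, deficiency R S ≤ deficiency R S₀ := fun S ↦ hS₀ ▸ le_csSup hbdd ⟨S, rfl⟩
  rw [← hS₀]
  refine le_antisymm (csSup_le' ?_) ?_
  · rintro _ ⟨D, φ, hinj, hR, rfl⟩
    have := card_add_deficiency_le_card hinj hR S₀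
    omega
  rcases isEmpty_or_nonempty Y with hY | hY
  · have : deficiency R univ = Fintype.card X := by simp [deficiency, neighbors]
    have := hmax univ
    omega
  obtain ⟨D, φ, hinj, hR, hD⟩ := exists_matching_card_ge_of_deficiency_le hmax
  refine hD.trans (le_csSup ⟨Fintype.card X, ?_⟩ ⟨D, φ, hinj, hR, rfl⟩)
  rintro _ ⟨D, φ, hinj, hR, rfl⟩
  simpa [deficiency] using card_add_deficiency_le_card hinj hR ∅
end

section
/- Let G be a non-discrete Hausdorff topological group, U an identity neighborhood in G, and E, F finite subsets of G. Then there exists an injective map φ : F → G such that φ(x) ∈ U·x for every x ∈ F, and φ(F) ∩ g·φ(F) = ∅ for every g ∈ E with g ≠ e. -/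
/-!
Choose the points `φ x` one at a time. The constraints on `φ x` coming from the already chosen
points forbid only finitely many values (each `φ y` rules out `E·φ y`, `E⁻¹·φ y` and `φ y` itself),
while the admissible region `U·x` is a neighborhood of `x`, hence infinite, because a non-discrete
T1 group has no isolated points.
-/

open Filter Topology

lemma MulAction.IsPretransitive.nhdsNE_neBot_of_not_discreteTopology (G : Type*) {α : Type*}
    [Group G] [MulAction G α] [MulAction.IsPretransitive G α] [TopologicalSpace α]
    [ContinuousConstSMul G α] (h : ¬DiscreteTopology α) (x : α) : (𝓝[≠] x).NeBot := by
  rwa [neBot_iff, Ne, ← isOpen_singleton_iff_punctured_nhds,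
    ← MulAction.IsPretransitive.discreteTopology_iff G x]

lemma Finset.exists_pairwise_not_rel_of_infinite {ι α : Type*} [Nonempty α] (F : Finset ι)
    (V : ι → Set α) (hV : ∀ i ∈ F, (V i).Infinite) (r : α → α → Prop) (hr : ∀ b, {a | r a b ∨ r b a}.Finite) :
    ∃ φ : ι → α, (∀ i ∈ F, φ i ∈ V i) ∧ (F : Set ι).Pairwise fun i j => ¬r (φ i) (φ j) := by
  classical
  induction F using Finset.induction_on with
  | empty => exact ⟨fun _ => Classical.arbitrary _, by simp, by simp⟩
  | @insert a F ha ih =>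
    obtain ⟨φ, hφV, hφr⟩ := ih fun i hi => hV i (mem_insert_of_mem hi)
    have hforbidden : (⋃ j ∈ F, {b | r b (φ j) ∨ r (φ j) b}).Finite :=
      F.finite_toSet.biUnion fun j _ => hr (φ j)
    obtain ⟨v, hvV, hvr⟩ :=
      (hV a (mem_insert_self a F)).exists_notMem_finset hforbidden.toFinset
    simp only [Set.Finite.mem_toFinset, Set.mem_iUnion, Set.mem_ofPred_eq, not_exists,
      not_or] at hvr
    have hφ'F : ∀ i ∈ F, Function.update φ a v i = φ i := fun i hi =>
      Function.update_of_ne (ne_of_mem_of_not_mem hi ha) v φ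
    refine ⟨Function.update φ a v, fun i hi => ?_, ?_⟩
    · rcases mem_insert.mp hi with rfl | hi
      · simpa using hvV
      · simpa [hφ'F i hi] using hφV i hi
    · rw [coe_insert, Set.pairwise_insert]
      refine ⟨fun i hi j hj hij => by simpa [hφ'F i hi, hφ'F j hj] using hφr hi hj hij,
        fun j hj _ => ?_⟩
      simpa [hφ'F j hj] using hvr j hj

/-- In a non-discrete Hausdorff topological group, for any identity neighborhood `U` and
finite sets `E, F`, there is an injection `φ : F → G` with `φ(x) ∈ Ux` for all `x ∈ F` and
`φ(F) ∩ g·φ(F) = ∅` for every `g ∈ E`, `g ≠ e`. -/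
theorem stmt_4 {G : Type*} [Group G] [TopologicalSpace G] [IsTopologicalGroup G] [T2Space G]
    (hnd : ¬ DiscreteTopology G) (U : Set G) (hU : U ∈ nhds (1 : G)) (E F : Finset G) :
    ∃ φ : G → G, Set.InjOn φ ↑F ∧ (∀ x ∈ F, φ x * x⁻¹ ∈ U) ∧
      ∀ g ∈ E, g ≠ 1 → (φ '' ↑F) ∩ ((g * ·) '' (φ '' ↑F)) = ∅ := by
  have hV : ∀ x ∈ F, {v | v * x⁻¹ ∈ U}.Infinite := fun x _ =>
    have := MulAction.IsPretransitive.nhdsNE_neBot_of_not_discreteTopology G hnd x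
    infinite_of_mem_nhds x <| (continuous_mul_const x⁻¹).continuousAt.preimage_mem_nhds
      (by simpa using hU)
  -- `φ x ∉ S * φ y` for `x ≠ y` gives injectivity (via `1 ∈ S`) and separation at once.
  set S : Set G := insert 1 ↑E
  have hS : S.Finite := E.finite_toSet.insert 1
  have hr : ∀ b : G, {a | a * b⁻¹ ∈ S ∨ b * a⁻¹ ∈ S}.Finite := fun b =>
    (hS.preimage (mul_left_injective b⁻¹).injOn).union
      (hS.preimage ((mul_right_injective b).comp inv_injective).injOn)
  obtain ⟨φ, hφU, hφr⟩ := F.exists_pairwise_not_rel_of_infinite _ hV _ hr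
  have hsep : ∀ x ∈ F, ∀ y ∈ F, x ≠ y → ∀ g ∈ S, φ x ≠ g * φ y :=
    fun x hx y hy hxy g hg h => hφr hx hy hxy (by rwa [h, mul_inv_cancel_right])
  refine ⟨φ, fun x hx y hy h => ?_, hφU, fun g hg hg1 => ?_⟩
  · by_contra hxy
    exact hsep x hx y hy hxy 1 (Set.mem_insert 1 _) (by rw [h, one_mul])
  · refine Set.eq_empty_of_forall_notMem ?_
    rintro _ ⟨⟨x, hx, rfl⟩, _, ⟨y, hy, rfl⟩, h⟩
    rcases eq_or_ne x y with rfl | hxy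
    · exact hg1 (mul_eq_right.mp h)
    · exact hsep x hx y hy hxy g (Set.mem_insert_of_mem 1 hg) h.symm
end

section
/- Let X be a uniform space. Then the map Φ sending a bounded uniformly continuous function f : X → ℝ to the linear functional a ↦ ∑_{x} a(x) f(x) on the space ℝX of finitely supported real functions on X (equipped with the UEB topology) is a linear isomorphism from UC_b(X) onto the continuous dual of ℝX. -/
/-- A pseudo-metric. -/
structure IsPseudoMetric {X : Type*} (d : X → X → ℝ) : Prop where
  refl : ∀ x, d x x = 0
  symm : ∀ x y, d x y = d y x
  triangle : ∀ x y z, d x z ≤ d x y + d y z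

/-- A uniformly continuous pseudo-metric on a uniform space. -/
def IsUCPseudoMetric {X : Type*} [UniformSpace X] (d : X → X → ℝ) : Prop :=
  IsPseudoMetric d ∧ UniformContinuous (fun p : X × X => d p.1 p.2)

/-- The semi-norm `p_d` on finitely supported functions:
`p_d(a) = sup { |∑_x a(x) f(x)| : f : (X,d) → [-1,1] 1-Lipschitz }`. -/
noncomputable def pSemi {X : Type*} (d : X → X → ℝ) (a : X →₀ ℝ) : ℝ :=
  ⨆ f : {f : X → ℝ // (∀ x y, |f x - f y| ≤ d x y) ∧ ∀ x, |f x| ≤ 1},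
    |a.sum fun x c => c * f.1 x|

/-- The UEB topology on `ℝX`, generated by the balls of the semi-norms `p_d` where `d` runs
through the uniformly continuous pseudo-metrics on `X`. -/
noncomputable def uebTopology (X : Type*) [UniformSpace X] : TopologicalSpace (X →₀ ℝ) :=
  TopologicalSpace.generateFrom
    {s | ∃ (a : X →₀ ℝ) (d : X → X → ℝ) (ε : ℝ), IsUCPseudoMetric d ∧ 0 < ε ∧
      s = {b : X →₀ ℝ | pSemi d (b - a) < ε}}

namespace UEBAux

variable {X : Type*}

lemma dnn {d : X → X → ℝ} (hd : IsPseudoMetric d) (x y : X) : 0 ≤ d x y := by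
  have h := hd.triangle x y x
  rw [hd.refl, hd.symm y x] at h
  linarith

abbrev T (d : X → X → ℝ) := {f : X → ℝ // (∀ x y, |f x - f y| ≤ d x y) ∧ ∀ x, |f x| ≤ 1}

lemma sum_eq (f : X → ℝ) (a : X →₀ ℝ) :
    (a.sum fun x c => c * f x) = Finsupp.linearCombination ℝ f a := by
  rw [Finsupp.linearCombination_apply]; rfl

lemma Tnonempty {d : X → X → ℝ} (hd : IsPseudoMetric d) : Nonempty (T d) :=
  ⟨⟨0, fun x y => by simpa using dnn hd x y, fun x => by simp⟩⟩

lemma bdd (d : X → X → ℝ) (a : X →₀ ℝ) :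
    ∀ g : T d, |a.sum fun x c => c * g.1 x| ≤ a.sum fun _ c => |c| := by
  intro g
  refine (Finset.abs_sum_le_sum_abs _ _).trans ?_
  refine Finset.sum_le_sum fun x _ => ?_
  rw [abs_mul]
  exact mul_le_of_le_one_right (abs_nonneg _) (g.2.2 x)

lemma bddAbove (d : X → X → ℝ) (a : X →₀ ℝ) :
    BddAbove (Set.range fun g : T d => |a.sum fun x c => c * g.1 x|) :=
  ⟨_, by rintro r ⟨g, rfl⟩; exact bdd d a g⟩

lemma le_pSemi (d : X → X → ℝ) (a : X →₀ ℝ) (g : T d) :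
    |a.sum fun x c => c * g.1 x| ≤ pSemi d a :=
  le_ciSup (bddAbove d a) g

lemma pSemi_le {d : X → X → ℝ} (hd : IsPseudoMetric d) {a : X →₀ ℝ} {M : ℝ}
    (h : ∀ g : T d, |a.sum fun x c => c * g.1 x| ≤ M) : pSemi d a ≤ M := by
  have := Tnonempty hd
  exact ciSup_le h

lemma pSemi_nonneg {d : X → X → ℝ} (hd : IsPseudoMetric d) (a : X →₀ ℝ) :
    0 ≤ pSemi d a :=
  le_trans (abs_nonneg _) (le_pSemi d a (Classical.choice (Tnonempty hd)))

lemma pSemi_add {d : X → X → ℝ} (hd : IsPseudoMetric d) (a b : X →₀ ℝ) :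
    pSemi d (a + b) ≤ pSemi d a + pSemi d b := by
  refine pSemi_le hd fun g => ?_
  simp only [sum_eq, map_add]
  exact (abs_add_le _ _).trans (add_le_add (le_pSemi d a g |>.trans_eq' (by rw [sum_eq]))
    (le_pSemi d b g |>.trans_eq' (by rw [sum_eq])))

lemma pSemi_neg {d : X → X → ℝ} (hd : IsPseudoMetric d) (a : X →₀ ℝ) :
    pSemi d (-a) ≤ pSemi d a := by
  refine pSemi_le hd fun g => ?_
  rw [sum_eq, map_neg, abs_neg, ← sum_eq]
  exact le_pSemi d a g

lemma pSemi_smul_le {d : X → X → ℝ} (hd : IsPseudoMetric d) (t : ℝ) (a : X →₀ ℝ) :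
    pSemi d (t • a) ≤ |t| * pSemi d a := by
  refine pSemi_le hd fun g => ?_
  rw [sum_eq, map_smul, smul_eq_mul, abs_mul, ← sum_eq]
  exact mul_le_mul_of_nonneg_left (le_pSemi d a g) (abs_nonneg t)

lemma pSemi_mono {d₁ d₂ : X → X → ℝ} (hd₁ : IsPseudoMetric d₁)
    (h : ∀ x y, d₁ x y ≤ d₂ x y) (a : X →₀ ℝ) : pSemi d₁ a ≤ pSemi d₂ a := by
  refine pSemi_le hd₁ fun g => ?_
  exact le_pSemi d₂ a ⟨g.1, fun x y => (g.2.1 x y).trans (h x y), g.2.2⟩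

lemma pSemi_zero {d : X → X → ℝ} (hd : IsPseudoMetric d) : pSemi d 0 = 0 := by
  refine le_antisymm (pSemi_le hd fun g => by simp) (pSemi_nonneg hd 0)

end UEBAux
section
variable {X : Type*}
namespace UEBAux2

lemma pSemi_single_le {d : X → X → ℝ} (hd : IsPseudoMetric d) (x : X) :
    pSemi d (Finsupp.single x 1) ≤ 1 := by
  refine UEBAux.pSemi_le hd fun g => ?_
  rw [UEBAux.sum_eq, Finsupp.linearCombination_single, one_smul]
  exact g.2.2 x

lemma pSemi_single_sub {d : X → X → ℝ} (hd : IsPseudoMetric d) (x y : X) :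
    pSemi d (Finsupp.single x 1 - Finsupp.single y 1) ≤ d x y := by
  refine UEBAux.pSemi_le hd fun g => ?_
  rw [UEBAux.sum_eq, map_sub, Finsupp.linearCombination_single, Finsupp.linearCombination_single,
    one_smul, one_smul]
  exact g.2.1 x y

variable [UniformSpace X]

lemma zero_UC : IsUCPseudoMetric (fun _ _ : X => (0:ℝ)) :=
  ⟨⟨fun _ => rfl, fun _ _ => rfl, fun _ _ _ => by norm_num⟩, uniformContinuous_const⟩

lemma add_UC {d₁ d₂ : X → X → ℝ} (h₁ : IsUCPseudoMetric d₁) (h₂ : IsUCPseudoMetric d₂) :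
    IsUCPseudoMetric (fun x y => d₁ x y + d₂ x y) := by
  refine ⟨⟨fun x => by rw [h₁.1.refl, h₂.1.refl, add_zero],
    fun x y => by rw [h₁.1.symm, h₂.1.symm],
    fun x y z => by have := h₁.1.triangle x y z; have := h₂.1.triangle x y z; linarith⟩,
    h₁.2.add h₂.2⟩

lemma mem_uniformity {d : X → X → ℝ} (hd : IsUCPseudoMetric d) {ε : ℝ} (hε : 0 < ε) :
    {p : X × X | d p.1 p.2 < ε} ∈ uniformity X := by
  have h1 : Filter.Tendsto (fun p : X × X => ((p.1, p.1), p))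
      (uniformity X) (uniformity (X × X)) := by
    rw [uniformity_prod_eq_comap_prod, Filter.tendsto_comap_iff]
    exact Filter.Tendsto.prodMk (tendsto_diag_uniformity _ _) Filter.tendsto_id
  have h2 : Filter.Tendsto (fun p : X × X => (d p.1 p.1, d p.1 p.2))
      (uniformity X) (uniformity ℝ) := Filter.Tendsto.comp hd.2 h1
  have h3 : Filter.Tendsto (fun p : X × X => ((0:ℝ), d p.1 p.2))
      (uniformity X) (uniformity ℝ) := by
    refine h2.congr fun p => by rw [hd.1.refl]
  have h4 := (Metric.uniformity_basis_dist.tendsto_right_iff).1 h3 ε hε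
  refine Filter.mem_of_superset h4 fun p hp => ?_
  simp only [Real.dist_eq, Set.mem_setOf_eq] at hp ⊢
  have := UEBAux.dnn hd.1 p.1 p.2
  rw [abs_sub_comm, sub_zero, abs_of_nonneg this] at hp
  exact hp

/-- extraction lemma: every UEB-open set containing `0` contains a seminorm ball at `0`. -/
lemma exists_ball_subset {U : Set (X →₀ ℝ)}
    (hU : TopologicalSpace.GenerateOpen
      {s | ∃ (a : X →₀ ℝ) (d : X → X → ℝ) (ε : ℝ), IsUCPseudoMetric d ∧ 0 < ε ∧
        s = {b : X →₀ ℝ | pSemi d (b - a) < ε}} U)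
    (h0 : (0 : X →₀ ℝ) ∈ U) :
    ∃ (d : X → X → ℝ) (ε : ℝ), IsUCPseudoMetric d ∧ 0 < ε ∧
      {b : X →₀ ℝ | pSemi d b < ε} ⊆ U := by
  induction hU with
  | basic s hs =>
    obtain ⟨a, d, ε, hd, hε, rfl⟩ := hs
    have h0' : pSemi d (0 - a) < ε := h0
    rw [zero_sub] at h0'
    refine ⟨d, ε - pSemi d (-a), hd, by linarith, fun b hb => ?_⟩
    simp only [Set.mem_setOf_eq] at hb ⊢
    have : pSemi d (b - a) ≤ pSemi d b + pSemi d (-a) := by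
      rw [sub_eq_add_neg]; exact UEBAux.pSemi_add hd.1 b (-a)
    linarith
  | univ => exact ⟨_, 1, zero_UC, one_pos, fun _ _ => trivial⟩
  | inter s t _ _ ihs iht =>
    obtain ⟨d₁, ε₁, hd₁, hε₁, h₁⟩ := ihs h0.1
    obtain ⟨d₂, ε₂, hd₂, hε₂, h₂⟩ := iht h0.2
    refine ⟨fun x y => d₁ x y + d₂ x y, min ε₁ ε₂, add_UC hd₁ hd₂, lt_min hε₁ hε₂,
      fun b hb => ?_⟩
    simp only [Set.mem_setOf_eq] at hb
    constructor
    · exact h₁ <| lt_of_le_of_lt (UEBAux.pSemi_mono hd₁.1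
        (fun x y => le_add_of_nonneg_right (UEBAux.dnn hd₂.1 x y)) b) (hb.trans_le (min_le_left _ _))
    · exact h₂ <| lt_of_le_of_lt (UEBAux.pSemi_mono hd₂.1
        (fun x y => le_add_of_nonneg_left (UEBAux.dnn hd₁.1 x y)) b) (hb.trans_le (min_le_right _ _))
  | sUnion S _ ih =>
    obtain ⟨s, hsS, hs⟩ := h0
    obtain ⟨d, ε, hd, hε, h⟩ := ih s hsS hs
    exact ⟨d, ε, hd, hε, fun b hb => ⟨s, hsS, h hb⟩⟩

end UEBAux2
end

/-- The map `Φ : f ↦ (a ↦ ∑_x a(x) f(x))` is a linear isomorphism from the bounded uniformly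
continuous functions on `X` onto the continuous dual of `ℝX` with the UEB topology. -/
theorem stmt_5 {X : Type*} [UniformSpace X] :
    (∀ f : X → ℝ, (UniformContinuous f ∧ ∃ C, ∀ x, |f x| ≤ C) →
        IsLinearMap ℝ (fun a : X →₀ ℝ => a.sum fun x c => c * f x) ∧
        @Continuous _ _ (uebTopology X) _ (fun a : X →₀ ℝ => a.sum fun x c => c * f x)) ∧
    Set.InjOn (fun f : X → ℝ => (fun a : X →₀ ℝ => a.sum fun x c => c * f x))
      {f | UniformContinuous f ∧ ∃ C, ∀ x, |f x| ≤ C} ∧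
    (∀ F : (X →₀ ℝ) →ₗ[ℝ] ℝ, @Continuous _ _ (uebTopology X) _ F →
      ∃ f : X → ℝ, (UniformContinuous f ∧ ∃ C, ∀ x, |f x| ≤ C) ∧
        ∀ a : X →₀ ℝ, (a.sum fun x c => c * f x) = F a) := by
  classical
  refine ⟨?_, ?_, ?_⟩
  · rintro f ⟨hf, C, hC⟩
    refine ⟨⟨fun a b => by simp [UEBAux.sum_eq, map_add], fun t a => by
      simp [UEBAux.sum_eq, map_smul]⟩, ?_⟩
    set C' : ℝ := max C 1 with hC'def
    have hC'1 : (1:ℝ) ≤ C' := le_max_right _ _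
    have hC'0 : (0:ℝ) < C' := lt_of_lt_of_le one_pos hC'1
    set g : X → ℝ := fun x => f x / C' with hgdef
    set d : X → X → ℝ := fun x y => |g x - g y| with hddef
    have hdP : IsPseudoMetric d := ⟨fun x => by simp [hddef], fun x y => abs_sub_comm _ _,
      fun x y z => by simpa only [hddef] using abs_sub_le (g x) (g y) (g z)⟩
    have hgUC : UniformContinuous g := by
      have h := (uniformContinuous_const_smul (C'⁻¹ : ℝ)).comp hf
      simpa [hgdef, div_eq_inv_mul, Function.comp_def] using h
    have hdUC : IsUCPseudoMetric d :=
      ⟨hdP, Real.uniformContinuous_abs.comp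
        ((hgUC.comp uniformContinuous_fst).sub (hgUC.comp uniformContinuous_snd))⟩
    have hgtest : (∀ x y, |g x - g y| ≤ d x y) ∧ ∀ x, |g x| ≤ 1 := by
      refine ⟨fun x y => le_refl _, fun x => ?_⟩
      rw [hgdef]
      simp only [abs_div, abs_of_pos hC'0]
      rw [div_le_one hC'0]
      exact (hC x).trans (le_max_left _ _)
    have key : ∀ a : X →₀ ℝ, |a.sum fun x c => c * f x| ≤ C' * pSemi d a := by
      intro a
      have h1 : (a.sum fun x c => c * f x) = C' * a.sum fun x c => c * g x := by
        rw [Finsupp.mul_sum]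
        refine Finsupp.sum_congr fun x _ => ?_
        rw [hgdef]
        field_simp
      rw [h1, abs_mul, abs_of_pos hC'0]
      exact mul_le_mul_of_nonneg_left (UEBAux.le_pSemi d a ⟨g, hgtest⟩) hC'0.le
    letI : TopologicalSpace (X →₀ ℝ) := uebTopology X
    rw [continuous_def]
    intro U hU
    rw [isOpen_iff_forall_mem_open]
    intro a₀ ha₀
    obtain ⟨ε, hε, hball⟩ := Metric.isOpen_iff.1 hU _ ha₀
    refine ⟨{b | pSemi d (b - a₀) < ε / C'}, fun b hb => ?_, ?_, ?_⟩
    · apply hball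
      rw [Metric.mem_ball, Real.dist_eq]
      have h2 : (b.sum fun x c => c * f x) - (a₀.sum fun x c => c * f x)
          = ((b - a₀).sum fun x c => c * f x) := by
        simp [UEBAux.sum_eq, map_sub]
      rw [h2]
      calc |(b - a₀).sum fun x c => c * f x| ≤ C' * pSemi d (b - a₀) := key _
        _ < C' * (ε / C') := by
            exact mul_lt_mul_of_pos_left hb hC'0
        _ = ε := by field_simp
    · exact TopologicalSpace.isOpen_generateFrom_of_mem ⟨a₀, d, ε / C', hdUC, by positivity, rfl⟩
    · simp only [Set.mem_setOf_eq, sub_self, UEBAux.pSemi_zero hdP]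
      positivity
  · intro f hf g hg h
    funext x
    have h1 := congrFun h (Finsupp.single x 1)
    simpa using h1
  · intro F hF
    have h0 : (0 : X →₀ ℝ) ∈ F ⁻¹' Set.Ioo (-1:ℝ) 1 := by
      simp [map_zero]
    have hop : @IsOpen _ (uebTopology X) (F ⁻¹' Set.Ioo (-1:ℝ) 1) := by
      exact @Continuous.isOpen_preimage _ _ (uebTopology X) _ _ hF _ isOpen_Ioo
    obtain ⟨d, ε, hd, hε, hsub⟩ := UEBAux2.exists_ball_subset hop h0
    have hbound : ∀ a : X →₀ ℝ, |F a| * ε ≤ pSemi d a := by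
      intro a
      refine le_of_forall_pos_le_add ?_
      intro c hc
      have hp0 : 0 ≤ pSemi d a := UEBAux.pSemi_nonneg hd.1 a
      have hpc : 0 < pSemi d a + c := by linarith
      set t : ℝ := ε / (pSemi d a + c) with htdef
      have ht0 : 0 < t := div_pos hε hpc
      have h1 : pSemi d (t • a) < ε := by
        calc pSemi d (t • a) ≤ |t| * pSemi d a := UEBAux.pSemi_smul_le hd.1 t a
          _ = t * pSemi d a := by rw [abs_of_pos ht0]
          _ < t * (pSemi d a + c) := mul_lt_mul_of_pos_left (lt_add_of_pos_right _ hc) ht0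
          _ = ε := by rw [htdef]; field_simp
      have h2 := hsub h1
      have h3 : |F (t • a)| < 1 := abs_lt.2 ⟨h2.1, h2.2⟩
      rw [map_smul, smul_eq_mul, abs_mul, abs_of_pos ht0, htdef] at h3
      have h4 : ε / (pSemi d a + c) * |F a| * (pSemi d a + c) < 1 * (pSemi d a + c) :=
        mul_lt_mul_of_pos_right h3 hpc
      have h5 : ε * |F a| < pSemi d a + c := by
        field_simp at h4
        linarith
      linarith [mul_comm ε |F a|]
    set f : X → ℝ := fun x => F (Finsupp.single x 1) with hfdef
    have hfb : ∀ x, |f x| ≤ 1 / ε := by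
      intro x
      rw [le_div_iff₀ hε]
      exact (hbound _).trans (UEBAux2.pSemi_single_le hd.1 x)
    have hfd : ∀ x y, |f x - f y| * ε ≤ d x y := by
      intro x y
      have h1 : f x - f y = F (Finsupp.single x 1 - Finsupp.single y 1) := by
        rw [map_sub]
      rw [h1]
      exact (hbound _).trans (UEBAux2.pSemi_single_sub hd.1 x y)
    have hfUC : UniformContinuous f := by
      refine Metric.uniformity_basis_dist.tendsto_right_iff.2 ?_
      intro r hr
      have hmem := UEBAux2.mem_uniformity hd (show (0:ℝ) < r * ε from mul_pos hr hε)
      filter_upwards [hmem] with p hp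
      rw [Real.dist_eq]
      have h1 := hfd p.1 p.2
      have h2 : |f p.1 - f p.2| * ε < r * ε := lt_of_le_of_lt h1 hp
      exact lt_of_mul_lt_mul_right h2 hε.le
    refine ⟨f, ⟨hfUC, 1 / ε, hfb⟩, fun a => ?_⟩
    conv_rhs => rw [← Finsupp.sum_single a]
    rw [map_finsuppSum]
    refine Finsupp.sum_congr fun x _ => ?_
    have h1 : Finsupp.single x (a x) = (a x) • Finsupp.single x 1 := by
      rw [Finsupp.smul_single', mul_one]
    rw [h1, map_smul, smul_eq_mul]
end

section
/- Let X be a perfect Hausdorff uniform space. Then the set of uniform averages δ_F := (1/|F|)∑_{x∈F} δ_x over finite nonempty subsets F ⊆ X is dense, with respect to the UEB topology, in the set of finitely supported functions a : X → ℝ with a ≥ 0 and ∑_x a(x) = 1. -/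
/-!
Every UEB neighbourhood of `a` contains a ball `{b | p_D (b - a) < ε}` for a single uniformly
continuous pseudo-metric `D` (sum the finitely many pseudo-metrics involved). Write
`a = ∑_{x ∈ S} a(x) δ_x`, choose `N` large and integers `k x` summing to `N` with
`∑ |k x - N a(x)| ≤ 2|S|`. Since `X` is perfect and Hausdorff, every `D`-ball is infinite, so we
can pick pairwise disjoint sets `G x` of `k x` points at `D`-distance `< ε/2` from `x`. For
`F = ⋃ G x`, moving each point of `G x` to `x` costs at most `ε/2` in `p_D`, and replacing
`k x / N` by `a(x)` costs at most `2|S|/N`.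
-/

open Finsupp Topology

section PSemi

variable {X : Type*} {d D : X → X → ℝ}

lemma IsPseudoMetric.nonneg (hd : IsPseudoMetric d) (x y : X) : 0 ≤ d x y := by
  linarith [hd.refl x, hd.triangle x y x, hd.symm y x]

lemma Finsupp.sum_mul_eq_linearCombination (f : X → ℝ) (a : X →₀ ℝ) :
    (a.sum fun x c => c * f x) = linearCombination ℝ f a := by
  simp [linearCombination_apply, smul_eq_mul]

lemma abs_linearCombination_le_pSemi {f : X → ℝ} (hf : ∀ x y, |f x - f y| ≤ d x y)
    (hf₁ : ∀ x, |f x| ≤ 1) (a : X →₀ ℝ) : |linearCombination ℝ f a| ≤ pSemi d a := by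
  have hbdd : BddAbove (Set.range fun g : {g : X → ℝ // (∀ x y, |g x - g y| ≤ d x y) ∧
      ∀ x, |g x| ≤ 1} => |a.sum fun x c => c * g.1 x|) := by
    refine ⟨a.sum fun _ c => |c|, ?_⟩
    rintro _ ⟨g, rfl⟩
    refine (Finset.abs_sum_le_sum_abs _ _).trans (Finset.sum_le_sum fun x _ => ?_)
    rw [abs_mul]
    exact mul_le_of_le_one_right (abs_nonneg _) (g.2.2 x)
  rw [← sum_mul_eq_linearCombination]
  exact le_ciSup hbdd ⟨f, hf, hf₁⟩

lemma pSemi_nonneg (a : X →₀ ℝ) : 0 ≤ pSemi d a :=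
  Real.iSup_nonneg fun _ => abs_nonneg _

lemma pSemi_le {a : X →₀ ℝ} {C : ℝ} (hC : 0 ≤ C)
    (h : ∀ f : X → ℝ, (∀ x y, |f x - f y| ≤ d x y) → (∀ x, |f x| ≤ 1) →
      |linearCombination ℝ f a| ≤ C) : pSemi d a ≤ C :=
  Real.iSup_le (fun f => sum_mul_eq_linearCombination f.1 a ▸ h f.1 f.2.1 f.2.2) hC

lemma pSemi_add_le (a b : X →₀ ℝ) : pSemi d (a + b) ≤ pSemi d a + pSemi d b :=
  pSemi_le (add_nonneg (pSemi_nonneg a) (pSemi_nonneg b)) fun f hf hf₁ => by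
    rw [map_add]
    exact (abs_add_le _ _).trans (add_le_add (abs_linearCombination_le_pSemi hf hf₁ a)
      (abs_linearCombination_le_pSemi hf hf₁ b))

lemma pSemi_smul (r : ℝ) (a : X →₀ ℝ) : pSemi d (r • a) = |r| * pSemi d a := by
  simp only [pSemi, Real.mul_iSup_of_nonneg (abs_nonneg r),
    sum_mul_eq_linearCombination, map_smul, smul_eq_mul, abs_mul]

lemma pSemi_sum_le {ι : Type*} (s : Finset ι) (a : ι → X →₀ ℝ) :
    pSemi d (∑ i ∈ s, a i) ≤ ∑ i ∈ s, pSemi d (a i) :=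
  Finset.le_sum_of_subadditive _ (pSemi_le le_rfl fun _ _ _ => by simp) pSemi_add_le s a

lemma pSemi_mono (h : ∀ x y, d x y ≤ D x y) (a : X →₀ ℝ) : pSemi d a ≤ pSemi D a :=
  pSemi_le (pSemi_nonneg a) fun _ hf hf₁ =>
    abs_linearCombination_le_pSemi (fun x y => (hf x y).trans (h x y)) hf₁ a

lemma pSemi_single_le (x : X) : pSemi d (single x 1) ≤ 1 :=
  pSemi_le zero_le_one fun _ _ hf₁ => by simpa using hf₁ x

lemma pSemi_single_sub_single_le {x y : X} (h : 0 ≤ d y x) :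
    pSemi d (single y 1 - single x 1) ≤ d y x :=
  pSemi_le h fun f hf _ => by simpa using hf y x

end PSemi

section Topology

variable {X : Type*} [UniformSpace X] {d₁ d₂ D : X → X → ℝ}

lemma isUCPseudoMetric_zero : IsUCPseudoMetric fun _ _ : X => (0 : ℝ) :=
  ⟨⟨fun _ => rfl, fun _ _ => rfl, fun _ _ _ => by simp⟩, uniformContinuous_const⟩

lemma IsUCPseudoMetric.add (h₁ : IsUCPseudoMetric d₁) (h₂ : IsUCPseudoMetric d₂) :
    IsUCPseudoMetric fun x y => d₁ x y + d₂ x y := by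
  refine ⟨⟨fun x => ?_, fun x y => ?_, fun x y z => ?_⟩, h₁.2.add h₂.2⟩
  · simp [h₁.1.refl, h₂.1.refl]
  · rw [h₁.1.symm, h₂.1.symm]
  · linarith [h₁.1.triangle x y z, h₂.1.triangle x y z]

lemma exists_pSemi_ball_subset {s : Set (X →₀ ℝ)} (hs : IsOpen[uebTopology X] s)
    {a : X →₀ ℝ} (ha : a ∈ s) :
    ∃ D ε, IsUCPseudoMetric D ∧ 0 < ε ∧ {b | pSemi D (b - a) < ε} ⊆ s := by
  induction hs generalizing a with
  | basic s hs =>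
    obtain ⟨c, d, δ, hd, -, rfl⟩ := hs
    refine ⟨d, δ - pSemi d (a - c), hd, sub_pos.2 ha, fun b hb => ?_⟩
    have := pSemi_add_le (d := d) (b - a) (a - c)
    rw [sub_add_sub_cancel] at this
    exact this.trans_lt (lt_sub_iff_add_lt.1 hb)
  | univ => exact ⟨_, 1, isUCPseudoMetric_zero, one_pos, Set.subset_univ _⟩
  | inter s t _ _ ihs iht =>
    obtain ⟨D₁, ε₁, hD₁, hε₁, hs⟩ := ihs ha.1
    obtain ⟨D₂, ε₂, hD₂, hε₂, ht⟩ := iht ha.2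
    refine ⟨_, min ε₁ ε₂, hD₁.add hD₂, lt_min hε₁ hε₂, fun b hb => ⟨hs ?_, ht ?_⟩⟩
    · exact (pSemi_mono (fun x y => le_add_of_nonneg_right (hD₂.1.nonneg x y)) _).trans_lt
        (hb.trans_le (min_le_left _ _))
    · exact (pSemi_mono (fun x y => le_add_of_nonneg_left (hD₁.1.nonneg x y)) _).trans_lt
        (hb.trans_le (min_le_right _ _))
  | sUnion S _ ih =>
    obtain ⟨t, ht, hat⟩ := ha
    obtain ⟨D, ε, hD, hε, hsub⟩ := ih t ht hat
    exact ⟨D, ε, hD, hε, hsub.trans (Set.subset_sUnion_of_mem ht)⟩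

lemma mem_closure_uebTopology {S : Set (X →₀ ℝ)} {a : X →₀ ℝ}
    (h : ∀ D ε, IsUCPseudoMetric D → 0 < ε → ∃ b ∈ S, pSemi D (b - a) < ε) :
    a ∈ @closure _ (uebTopology X) S := by
  let := uebTopology X
  refine mem_closure_iff.2 fun o ho hao => ?_
  obtain ⟨D, ε, hD, hε, hsub⟩ := exists_pSemi_ball_subset ho hao
  obtain ⟨b, hbS, hb⟩ := h D ε hD hε
  exact ⟨b, hsub hb, hbS⟩

lemma IsUCPseudoMetric.infinite_ball [T1Space X] (hperf : ∀ x : X, ¬IsOpen ({x} : Set X))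
    (hD : IsUCPseudoMetric D) (x : X) {η : ℝ} (hη : 0 < η) : {y | D y x < η}.Infinite := by
  have : (𝓝[≠] x).NeBot := ⟨fun h => hperf x ((isOpen_singleton_iff_punctured_nhds x).2 h)⟩
  have hcont : Continuous fun y => D y x :=
    hD.2.continuous.comp (continuous_id.prodMk continuous_const)
  exact infinite_of_mem_nhds x ((isOpen_lt hcont continuous_const).mem_nhds (by simpa [hD.1.refl]))

end Topology

lemma Finset.exists_pairwiseDisjoint_subset_card_eq {ι α : Type*}
    (S : Finset ι) {U : ι → Set α} (hU : ∀ i ∈ S, (U i).Infinite) (k : ι → ℕ) :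
    ∃ G : ι → Finset α, (∀ i ∈ S, ↑(G i) ⊆ U i ∧ (G i).card = k i) ∧
      (S : Set ι).PairwiseDisjoint G := by
  classical
  induction S using Finset.induction_on with
  | empty => exact ⟨fun _ => ∅, by simp, by simp⟩
  | @insert i S hi ih =>
    obtain ⟨G, hGU, hG⟩ := ih fun j hj => hU j (mem_insert_of_mem hj)
    obtain ⟨F, hFU, hFk⟩ := ((hU i (mem_insert_self i S)).sdiff
      (S.biUnion G).finite_toSet).exists_subset_card_eq (k i)
    have hG' : ∀ j ∈ S, Function.update G i F j = G j := fun j hj =>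
      Function.update_of_ne (ne_of_mem_of_not_mem hj hi) _ _
    refine ⟨Function.update G i F, fun j hj => ?_, ?_⟩
    · rcases mem_insert.1 hj with rfl | hj
      · simpa using ⟨fun y hy => (hFU hy).1, hFk⟩
      · rw [hG' j hj]
        exact hGU j hj
    · rw [coe_insert, Set.pairwiseDisjoint_insert]
      refine ⟨fun j hj l hl hjl => ?_, fun j hj _ => ?_⟩
      · simpa only [Function.onFun, hG' j hj, hG' l hl] using hG hj hl hjl
      · rw [Function.update_self, hG' j hj, disjoint_left]
        exact fun y hyF hyG => (hFU hyF).2 (mem_coe.2 (mem_biUnion.2 ⟨j, hj, hyG⟩))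

lemma Finset.exists_nat_sum_eq_of_sum_eq_one {ι : Type*} (S : Finset ι)
    {a : ι → ℝ} (ha₀ : ∀ i ∈ S, 0 ≤ a i) (ha₁ : ∑ i ∈ S, a i = 1) (N : ℕ) :
    ∃ k : ι → ℕ, ∑ i ∈ S, k i = N ∧ ∑ i ∈ S, |(k i : ℝ) - N * a i| ≤ 2 * S.card := by
  classical
  obtain ⟨i₀, hi₀⟩ := nonempty_of_sum_ne_zero (ha₁.symm ▸ one_ne_zero)
  set m : ι → ℕ := fun i => ⌊(N : ℝ) * a i⌋₊
  have hm_le : ∀ i ∈ S, (m i : ℝ) ≤ N * a i := fun i hi =>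
    Nat.floor_le (mul_nonneg N.cast_nonneg (ha₀ i hi))
  have hm_sum : ∑ i ∈ S, m i ≤ N := by
    have : ∑ i ∈ S, (m i : ℝ) ≤ N := by
      calc ∑ i ∈ S, (m i : ℝ) ≤ ∑ i ∈ S, (N : ℝ) * a i := sum_le_sum hm_le
        _ = N := by rw [← mul_sum, ha₁, mul_one]
    exact_mod_cast this
  set r := N - ∑ i ∈ S, m i
  have hr : (r : ℝ) = ∑ i ∈ S, ((N : ℝ) * a i - m i) := by
    rw [sum_sub_distrib, ← mul_sum, ha₁, mul_one, Nat.cast_sub hm_sum, Nat.cast_sum]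
  have hr_le : (r : ℝ) ≤ S.card := by
    rw [hr, card_eq_sum_ones, Nat.cast_sum]
    refine sum_le_sum fun i _ => ?_
    have : (N : ℝ) * a i < m i + 1 := Nat.lt_floor_add_one _
    push_cast
    linarith
  refine ⟨fun i => m i + if i = i₀ then r else 0, ?_, ?_⟩
  · rw [sum_add_distrib, sum_ite_eq' S i₀, if_pos hi₀]
    omega
  · calc ∑ i ∈ S, |((m i + if i = i₀ then r else 0 : ℕ) : ℝ) - N * a i|
        ≤ ∑ i ∈ S, (((N : ℝ) * a i - m i) + if i = i₀ then (r : ℝ) else 0) := by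
          refine sum_le_sum fun i hi => ?_
          rw [abs_le]
          have hr₀ : (0 : ℝ) ≤ r := r.cast_nonneg
          split_ifs <;> push_cast <;> constructor <;> linarith [hm_le i hi]
      _ = 2 * r := by rw [sum_add_distrib, sum_ite_eq' S i₀, if_pos hi₀, ← hr]; ring
      _ ≤ 2 * S.card := by linarith

noncomputable def uniformAverage {X : Type*} (F : Finset X) : X →₀ ℝ :=
  (F.card : ℝ)⁻¹ • ∑ x ∈ F, single x 1

section Averages

open Finset

variable {X : Type*} {d : X → X → ℝ}

lemma uniformAverage_biUnion [DecidableEq X] {S : Finset X} {G : X → Finset X}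
    (hG : (S : Set X).PairwiseDisjoint G) :
    uniformAverage (S.biUnion G) = ((S.biUnion G).card : ℝ)⁻¹ •
      (∑ x ∈ S, ∑ y ∈ G x, (single y 1 - single x 1) + ∑ x ∈ S, ((G x).card : ℝ) • single x 1) := by
  rw [uniformAverage, sum_biUnion hG, ← sum_add_distrib]
  congr 1
  refine sum_congr rfl fun x _ => ?_
  rw [sum_sub_distrib, sum_const, Nat.cast_smul_eq_nsmul, sub_add_cancel]

lemma pSemi_sum_smul_single_le (S : Finset X) (c : X → ℝ) :
    pSemi d (∑ x ∈ S, c x • single x 1) ≤ ∑ x ∈ S, |c x| := by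
  refine (pSemi_sum_le _ _).trans (sum_le_sum fun x _ => ?_)
  rw [pSemi_smul]
  exact mul_le_of_le_one_right (abs_nonneg _) (pSemi_single_le x)

lemma pSemi_sum_sum_single_sub_single_le (hd : ∀ x y, 0 ≤ d x y) (S : Finset X)
    (G : X → Finset X) :
    pSemi d (∑ x ∈ S, ∑ y ∈ G x, (single y 1 - single x 1)) ≤ ∑ x ∈ S, ∑ y ∈ G x, d y x := by
  refine (pSemi_sum_le _ _).trans (sum_le_sum fun x _ => ?_)
  exact (pSemi_sum_le _ _).trans (sum_le_sum fun y _ => pSemi_single_sub_single_le (hd y x))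

lemma pSemi_inv_smul_sum_smul_single_sub_le (a : X →₀ ℝ) (c : X → ℝ) {N : ℝ} (hN : 0 < N) :
    pSemi d (N⁻¹ • ∑ x ∈ a.support, c x • single x 1 - a) ≤
      (∑ x ∈ a.support, |c x - N * a x|) / N := by
  have ha : ∑ x ∈ a.support, a x • single x 1 = a := by
    simp only [smul_single_one]
    exact sum_single a
  calc pSemi d (N⁻¹ • ∑ x ∈ a.support, c x • single x 1 - a)
      = pSemi d (∑ x ∈ a.support, ((c x - N * a x) / N) • single x 1) := by
        conv_lhs => enter [2, 2]; rw [← ha]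
        rw [Finset.smul_sum, ← sum_sub_distrib]
        refine congrArg _ (sum_congr rfl fun x _ => ?_)
        rw [smul_smul, ← sub_smul, sub_div, mul_div_cancel_left₀ _ hN.ne', inv_mul_eq_div]
    _ ≤ ∑ x ∈ a.support, |(c x - N * a x) / N| := pSemi_sum_smul_single_le _ _
    _ = (∑ x ∈ a.support, |c x - N * a x|) / N := by
        simp only [abs_div, abs_of_pos hN, sum_div]

lemma exists_uniformAverage_pSemi_sub_lt (hd : IsPseudoMetric d)
    (hball : ∀ x {η : ℝ}, 0 < η → {y | d y x < η}.Infinite) {a : X →₀ ℝ} (ha₀ : ∀ x, 0 ≤ a x)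
    (ha₁ : a.sum (fun _ c => c) = 1) {ε : ℝ} (hε : 0 < ε) :
    ∃ F : Finset X, F.Nonempty ∧ pSemi d (uniformAverage F - a) < ε := by
  classical
  set S := a.support
  obtain ⟨N, hN⟩ := exists_nat_gt (4 * S.card / ε)
  have hN₀ : (0 : ℝ) < N := lt_of_le_of_lt (by positivity) hN
  obtain ⟨k, hk_sum, hk_err⟩ := S.exists_nat_sum_eq_of_sum_eq_one (fun x _ => ha₀ x) ha₁ N
  obtain ⟨G, hG, hG_disj⟩ :=
    S.exists_pairwiseDisjoint_subset_card_eq (fun x _ => hball x (half_pos hε)) k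
  set F := S.biUnion G
  have hF_card : F.card = N := by
    rw [card_biUnion hG_disj, sum_congr rfl fun x hx => (hG x hx).2, hk_sum]
  refine ⟨F, card_pos.1 (by exact_mod_cast hF_card ▸ hN₀), ?_⟩
  set T := ∑ x ∈ S, ∑ y ∈ G x, (single y 1 - single x (1 : ℝ))
  have h_move : pSemi d ((N : ℝ)⁻¹ • T) ≤ ε / 2 := by
    rw [pSemi_smul, abs_inv, Nat.abs_cast, inv_mul_le_iff₀ hN₀]
    calc pSemi d T ≤ ∑ x ∈ S, ∑ y ∈ G x, d y x := pSemi_sum_sum_single_sub_single_le hd.nonneg _ _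
      _ ≤ ∑ x ∈ S, ∑ _y ∈ G x, ε / 2 :=
          sum_le_sum fun x hx => sum_le_sum fun y hy => ((hG x hx).1 hy).le
      _ = N * (ε / 2) := by
          rw [← hk_sum, Nat.cast_sum, Finset.sum_mul]
          exact sum_congr rfl fun x hx => by rw [sum_const, (hG x hx).2, nsmul_eq_mul]
  have h_round : pSemi d ((N : ℝ)⁻¹ • ∑ x ∈ S, ((G x).card : ℝ) • single x 1 - a) ≤
      2 * S.card / N := by
    rw [sum_congr rfl fun x hx => by rw [(hG x hx).2]]
    exact (pSemi_inv_smul_sum_smul_single_sub_le a _ hN₀).trans (by gcongr)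
  have hN_large : 2 * (S.card : ℝ) / N < ε / 2 := by
    rw [div_lt_iff₀ hN₀]
    rw [div_lt_iff₀ hε] at hN
    linarith
  calc pSemi d (uniformAverage F - a)
      ≤ pSemi d ((N : ℝ)⁻¹ • T) +
          pSemi d ((N : ℝ)⁻¹ • ∑ x ∈ S, ((G x).card : ℝ) • single x 1 - a) := by
        rw [uniformAverage_biUnion hG_disj, hF_card, smul_add, add_sub_assoc]
        exact pSemi_add_le _ _
    _ < ε := by linarith

end Averages

/-- In a perfect Hausdorff uniform space `X`, the uniform averages `δ_F` over finite nonempty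
subsets are UEB-dense in the positive normalized finitely supported functions. -/
theorem stmt_6 {X : Type*} [UniformSpace X] [T2Space X]
    (hperf : ∀ x : X, ¬ IsOpen ({x} : Set X)) :
    {a : X →₀ ℝ | (∀ x, 0 ≤ a x) ∧ a.sum (fun _ c => c) = 1} ⊆
      @closure _ (uebTopology X)
        {b : X →₀ ℝ | ∃ F : Finset X, F.Nonempty ∧
          b = (F.card : ℝ)⁻¹ • ∑ x ∈ F, Finsupp.single x 1} := by
  rintro a ⟨ha₀, ha₁⟩
  refine mem_closure_uebTopology fun D ε hD hε => ?_
  obtain ⟨F, hF, hlt⟩ := exists_uniformAverage_pSemi_sub_lt hD.1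
    (fun x _ hη => hD.infinite_ball hperf x hη) ha₀ ha₁ hε
  exact ⟨_, ⟨F, hF, rfl⟩, hlt⟩
end

section
/- Let G be a Hausdorff topological group. If there exists θ ∈ (0,1) such that for every finite subset E ⊆ G and every identity neighborhood U there is a finite nonempty F ⊆ G with μ(F, gF, U) ≥ θ|F| for all g ∈ E, then G is amenable. -/
/-!
Choose finite sets `F₁, F₂, …` by the hypothesis, each `Fⱼ₊₁` for the conjugated data
`Fⱼ⁻¹ Eⱼ Fⱼ` and a neighbourhood shrunk by conjugation under `Fⱼ`, and average `f (x₁ ⋯ xₖ)` over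
`xᵢ ∈ Fᵢ`. Translating by `g ∈ E` moves the average by at most `ε / θ + (1 - θ) ^ k * osc f`:
on the matched part of `F₁` (at least a `θ`-fraction) right uniform continuity costs `ε`, and the
unmatched points, paired arbitrarily, leave the same problem one level down. An ultrafilter limit
of these almost invariant means is an invariant mean.
-/

/-- Bounded right-uniformly continuous real functions on a topological group. -/
def RUCb (G : Type*) [Group G] [TopologicalSpace G] : Set (G → ℝ) :=
  {f | (∃ C, ∀ x, |f x| ≤ C) ∧
    ∀ ε > (0:ℝ), ∃ U ∈ nhds (1 : G), ∀ x y : G, x * y⁻¹ ∈ U → |f x - f y| ≤ ε}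

/-- A mean on a set `D` of real functions on `X`: positive, normalized, linear on `D`. -/
def IsMeanOn (X : Type*) (D : Set (X → ℝ)) (m : (X → ℝ) → ℝ) : Prop :=
  m (fun _ => 1) = 1 ∧
  (∀ f ∈ D, ∀ g ∈ D, m (f + g) = m f + m g) ∧
  (∀ (c : ℝ), ∀ f ∈ D, m (c • f) = c * m f) ∧
  (∀ f ∈ D, (∀ x, 0 ≤ f x) → 0 ≤ m f)

/-- A topological group is amenable if `RUC_b(G)` admits a left-invariant mean. -/
def TopAmenable (G : Type*) [Group G] [TopologicalSpace G] : Prop :=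
  ∃ m : (G → ℝ) → ℝ, IsMeanOn G (RUCb G) m ∧
    ∀ f ∈ RUCb G, ∀ g : G, m (fun x => f (g * x)) = m f

/-- The matching number `μ(A, B, U)`: the maximal size of a subset `D ⊆ A` admitting an
injection `φ : D → B` with `φ(x) ∈ Ux` (i.e. `φ(x)x⁻¹ ∈ U`) for all `x ∈ D`. -/
noncomputable def matchNum {G : Type*} [Group G] (A B : Finset G) (U : Set G) : ℕ :=
  sSup {n : ℕ | ∃ D : Finset G, D ⊆ A ∧ D.card = n ∧
    ∃ φ : G → G, Set.InjOn φ ↑D ∧ ∀ x ∈ D, φ x ∈ B ∧ φ x * x⁻¹ ∈ U}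

open Filter Finset Topology
open scoped Pointwise

lemma Monotone.abs_map_sub_le {X : Type*} {φ : (X → ℝ) →ₗ[ℝ] ℝ} (hφ : Monotone φ)
    (h1 : φ 1 = 1) {f f' : X → ℝ} {ε : ℝ}
    (h : ∀ x, |f x - f' x| ≤ ε) : |φ f - φ f'| ≤ ε := by
  have hconst : ∀ r : ℝ, φ (r • 1) = r := fun r => by rw [map_smul, h1, smul_eq_mul, mul_one]
  rw [← map_sub, abs_le]
  constructor
  · simpa [hconst] using hφ (show (-ε) • (1 : X → ℝ) ≤ f - f' from
      fun x => by simpa using (abs_le.1 (h x)).1)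
  · simpa [hconst] using hφ (show f - f' ≤ ε • (1 : X → ℝ) from
      fun x => by simpa using (abs_le.1 (h x)).2)

theorem topAmenable_of_tendsto_translate_sub {G I : Type*} [Group G] [TopologicalSpace G]
    (l : Filter I) [l.NeBot] (M : I → (G → ℝ) →ₗ[ℝ] ℝ) (hmono : ∀ i, Monotone (M i))
    (hone : ∀ i, M i 1 = 1)
    (hinv : ∀ f ∈ RUCb G, ∀ g : G,
      Tendsto (fun i => M i (fun x => f (g * x)) - M i f) l (𝓝 0)) :
    TopAmenable G := by
  set 𝒰 := Ultrafilter.of l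
  have hlim : ∀ f ∈ RUCb G,
      Tendsto (fun i => M i f) 𝒰 (𝓝 (limUnder (𝒰 : Filter I) fun i => M i f)) := by
    rintro f ⟨⟨C, hC⟩, -⟩
    refine tendsto_nhds_limUnder ?_
    have hbound : ∀ i, M i f ∈ Set.Icc (-C) C := fun i =>
      abs_le.1 (by simpa using (hmono i).abs_map_sub_le (hone i) (f' := 0) (by simpa using hC))
    obtain ⟨L, -, hL⟩ := isCompact_Icc.ultrafilter_le_nhds' (𝒰.map fun i => M i f)
      (Ultrafilter.mem_map.2 (univ_mem' hbound))
    exact ⟨L, hL⟩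
  refine ⟨fun f => limUnder (𝒰 : Filter I) fun i => M i f, ⟨?_, ?_, ?_, ?_⟩, ?_⟩
  · exact (tendsto_const_nhds.congr fun i => (hone i).symm).limUnder_eq
  · intro f hf f' hf'
    exact ((hlim f hf).add (hlim f' hf')).congr (fun i => (map_add _ _ _).symm) |>.limUnder_eq
  · intro c f hf
    exact ((hlim f hf).const_mul c).congr (fun i => (map_smul _ _ _).symm) |>.limUnder_eq
  · intro f hf hpos
    exact ge_of_tendsto' (hlim f hf) fun i => by simpa using hmono i (show 0 ≤ f from hpos)
  · intro f hf g
    have h := ((hinv f hf g).mono_left (Ultrafilter.of_le l)).add (hlim f hf)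
    rw [zero_add] at h
    exact (h.congr fun i => sub_add_cancel _ _).limUnder_eq

section IteratedAverage

variable {G : Type*} [Monoid G]

/-- `iterAvg [F₁, …, Fₖ] f` is the average of `f (x₁ * ⋯ * xₖ)` over `xᵢ ∈ Fᵢ`. -/
noncomputable def iterAvg : List (Finset G) → (G → ℝ) →ₗ[ℝ] ℝ
  | [] => LinearMap.proj 1
  | F :: L => (#F : ℝ)⁻¹ • ∑ x ∈ F, (iterAvg L).comp (LinearMap.funLeft ℝ ℝ (x * ·))

@[simp]
lemma iterAvg_nil (f : G → ℝ) : iterAvg [] f = f 1 := rfl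

lemma iterAvg_cons (F : Finset G) (L : List (Finset G)) (f : G → ℝ) :
    iterAvg (F :: L) f = (#F : ℝ)⁻¹ * ∑ x ∈ F, iterAvg L fun w => f (x * w) := by
  simp [iterAvg, LinearMap.sum_apply, LinearMap.funLeft, Function.comp_def]

lemma iterAvg_mono (L : List (Finset G)) : Monotone (iterAvg L) := by
  induction L with
  | nil => exact fun f f' h => h 1
  | cons F L ih =>
    intro f f' h
    simp only [iterAvg_cons]
    gcongr with x
    exact ih fun w => h (x * w)

lemma iterAvg_one {L : List (Finset G)} (hL : ∀ F ∈ L, F.Nonempty) : iterAvg L 1 = 1 := by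
  induction L with
  | nil => rfl
  | cons F L ih =>
    have hF : (#F : ℝ) ≠ 0 := by exact_mod_cast (hL F List.mem_cons_self).card_pos.ne'
    rw [iterAvg_cons]
    simp only [Pi.one_apply]
    rw [show (fun _ : G => (1 : ℝ)) = 1 from rfl,
      ih fun F' hF' => hL F' (List.mem_cons_of_mem _ hF'), sum_const, nsmul_one, inv_mul_cancel₀ hF]

end IteratedAverage

section Matching

variable {α : Type*} {u v : α → ℝ} {b : ℝ}

lemma abs_sum_sub_sum_le_of_card_eq {s t : Finset α} (hst : #s = #t)
    (hb : ∀ x ∈ t, ∀ y ∈ s, |u y - v x| ≤ b) :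
    |∑ y ∈ s, u y - ∑ x ∈ t, v x| ≤ #s * b := by
  set e := s.equivOfCardEq hst
  have hsum : ∑ y ∈ s, u y - ∑ x ∈ t, v x = ∑ y : s, (u y - v (e y)) := by
    rw [sum_sub_distrib, ← sum_coe_sort s, ← sum_coe_sort t, ← e.sum_comp]
  rw [hsum]
  calc |∑ y : s, (u y - v (e y))| ≤ ∑ y : s, |u y - v (e y)| := abs_sum_le_sum_abs _ _
    _ ≤ ∑ _y : s, b := sum_le_sum fun y _ => hb _ (e y).2 _ y.2
    _ = #s * b := by simp

lemma abs_sum_sub_sum_le_of_matching [DecidableEq α] {F D : Finset α} {σ : α → α} (hDF : D ⊆ F)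
    (hσ : Set.MapsTo σ D F) (hσinj : Set.InjOn σ D) {a : ℝ}
    (ha : ∀ x ∈ D, |u (σ x) - v x| ≤ a) (hb : ∀ x ∈ F, ∀ y ∈ F, |u y - v x| ≤ b) :
    |∑ y ∈ F, u y - ∑ x ∈ F, v x| ≤ #D * a + #(F \ D) * b := by
  have hσD : D.image σ ⊆ F := image_subset_iff.2 fun x hx => hσ hx
  have hcard : #(F \ D.image σ) = #(F \ D) := by
    rw [card_sdiff_of_subset hσD, card_sdiff_of_subset hDF, card_image_of_injOn hσinj]
  have hsplit : ∑ y ∈ F, u y - ∑ x ∈ F, v x = ∑ x ∈ D, (u (σ x) - v x) +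
      (∑ y ∈ F \ D.image σ, u y - ∑ x ∈ F \ D, v x) := by
    rw [← sum_sdiff hσD, ← sum_sdiff hDF, sum_image hσinj, sum_sub_distrib]
    ring
  rw [hsplit, ← hcard]
  refine (abs_add_le _ _).trans (add_le_add ?_ ?_)
  · calc |∑ x ∈ D, (u (σ x) - v x)| ≤ ∑ x ∈ D, |u (σ x) - v x| := abs_sum_le_sum_abs _ _
      _ ≤ ∑ _x ∈ D, a := sum_le_sum ha
      _ = #D * a := by simp
  · exact abs_sum_sub_sum_le_of_card_eq hcard fun x hx y hy =>
      hb x (mem_sdiff.1 hx).1 y (mem_sdiff.1 hy).1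

end Matching

lemma exists_matching_card_eq_matchNum {G : Type*} [Group G] (A B : Finset G) (U : Set G) :
    ∃ D ⊆ A, #D = matchNum A B U ∧
      ∃ φ : G → G, Set.InjOn φ D ∧ ∀ x ∈ D, φ x ∈ B ∧ φ x * x⁻¹ ∈ U := by
  set S := {n : ℕ | ∃ D : Finset G, D ⊆ A ∧ #D = n ∧
      ∃ φ : G → G, Set.InjOn φ D ∧ ∀ x ∈ D, φ x ∈ B ∧ φ x * x⁻¹ ∈ U}
  have hne : S.Nonempty := ⟨0, ∅, empty_subset _, rfl, id, by simp⟩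
  have hbdd : BddAbove S := ⟨#A, by rintro n ⟨D, hD, rfl, -⟩; exact card_le_card hD⟩
  obtain ⟨D, hD, hcard, hφ⟩ := Nat.sSup_mem hne hbdd
  exact ⟨D, hD, hcard, hφ⟩

section Group

variable {G : Type*} [Group G]

def conjNhd (F : Finset G) (U : Set G) : Set G := ⋂ x ∈ F, (fun u => x * u * x⁻¹) ⁻¹' U

lemma conj_mem_of_mem_conjNhd {F : Finset G} {U : Set G} {x u : G} (hx : x ∈ F)
    (hu : u ∈ conjNhd F U) : x * u * x⁻¹ ∈ U :=
  Set.mem_iInter₂.1 hu x hx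

lemma conjNhd_mem_nhds [TopologicalSpace G] [ContinuousMul G] (F : Finset G) {U : Set G}
    (hU : U ∈ 𝓝 (1 : G)) : conjNhd F U ∈ 𝓝 (1 : G) :=
  (biInter_finset_mem F).2 fun x _ =>
    ((continuous_const.mul continuous_id).mul continuous_const).continuousAt.preimage_mem_nhds
      (by simpa using hU)

variable [DecidableEq G]

lemma abs_iterAvg_cons_translate_sub_le {F : Finset G} (hF : F.Nonempty) {L : List (Finset G)}
    (hL : ∀ F' ∈ L, F'.Nonempty) {U : Set G} {g : G} {θ ε b : ℝ} {f : G → ℝ} (hε : 0 ≤ ε)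
    (hmatch : θ * #F ≤ matchNum F (F.image (g * ·)) U)
    (hfU : ∀ x y, x * y⁻¹ ∈ U → |f x - f y| ≤ ε)
    (hb : ∀ x ∈ F, ∀ y ∈ F,
      |iterAvg L (fun w => f (g * (y * w))) - iterAvg L (fun w => f (x * w))| ≤ b) :
    |iterAvg (F :: L) (fun w => f (g * w)) - iterAvg (F :: L) f| ≤ ε + (1 - θ) * b := by
  obtain ⟨D, hDF, hDcard, φ, hφinj, hφ⟩ := exists_matching_card_eq_matchNum F (F.image (g * ·)) U
  set σ : G → G := fun x => g⁻¹ * φ x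
  have hσ : Set.MapsTo σ D F := fun x hx => by
    obtain ⟨y, hy, hyx⟩ := mem_image.1 (hφ x hx).1
    simpa [σ, ← hyx] using hy
  have hσinj : Set.InjOn σ D := fun x hx y hy hxy => hφinj hx hy (mul_left_cancel hxy)
  have hclose : ∀ x ∈ D,
      |iterAvg L (fun w => f (g * (σ x * w))) - iterAvg L (fun w => f (x * w))| ≤ ε :=
    fun x hx => (iterAvg_mono L).abs_map_sub_le (iterAvg_one hL) fun w => hfU _ _ <| by
      simpa [σ, mul_assoc] using (hφ x hx).2
  have hsum := abs_sum_sub_sum_le_of_matching hDF hσ hσinj hclose hb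
  have hF0 : (0 : ℝ) < #F := by exact_mod_cast hF.card_pos
  have hb0 : 0 ≤ b := (abs_nonneg _).trans (hb _ hF.choose_spec _ hF.choose_spec)
  have hDF' : (#D : ℝ) ≤ #F := by exact_mod_cast card_le_card hDF
  rw [card_sdiff_of_subset hDF, Nat.cast_sub (card_le_card hDF)] at hsum
  rw [iterAvg_cons, iterAvg_cons, ← mul_sub, abs_mul, abs_inv, abs_of_pos hF0,
    inv_mul_le_iff₀ hF0]
  refine hsum.trans ?_
  nlinarith [mul_nonneg (sub_nonneg.2 hDF') hε, mul_nonneg (sub_nonneg.2 (hDcard ▸ hmatch)) hb0]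

noncomputable def selectionChain (sel : Finset G → Set G → Finset G) :
    ℕ → Finset G → Set G → List (Finset G)
  | 0, _, _ => []
  | k + 1, E, U =>
    sel E U :: selectionChain sel k ((sel E U)⁻¹ * E * sel E U) (conjNhd (sel E U) U)

def IsMatchingSelection (θ : ℝ) [TopologicalSpace G] (sel : Finset G → Set G → Finset G) :
    Prop :=
  ∀ E U, U ∈ 𝓝 (1 : G) → (sel E U).Nonempty ∧
    ∀ g ∈ E, θ * #(sel E U) ≤ matchNum (sel E U) ((sel E U).image (g * ·)) U

variable [TopologicalSpace G] [ContinuousMul G] {sel : Finset G → Set G → Finset G} {θ : ℝ}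

lemma IsMatchingSelection.nonempty_of_mem_chain (hsel : IsMatchingSelection θ sel) (k : ℕ)
    {E : Finset G} {U : Set G} (hU : U ∈ 𝓝 (1 : G)) :
    ∀ F ∈ selectionChain sel k E U, F.Nonempty := by
  induction k generalizing E U with
  | zero => simp [selectionChain]
  | succ k ih =>
    simp only [selectionChain, List.mem_cons, forall_eq_or_imp]
    exact ⟨(hsel E U hU).1, ih (conjNhd_mem_nhds _ hU)⟩

lemma IsMatchingSelection.abs_iterAvg_translate_sub_le (hsel : IsMatchingSelection θ sel)
    (hθ : 0 < θ) (k : ℕ) {E : Finset G} {U : Set G} (hU : U ∈ 𝓝 (1 : G)) {g : G} (hg : g ∈ E)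
    {f : G → ℝ} {ε c : ℝ} (hε : 0 ≤ ε) (hfU : ∀ x y, x * y⁻¹ ∈ U → |f x - f y| ≤ ε)
    (hfc : ∀ x y, |f x - f y| ≤ c) :
    |iterAvg (selectionChain sel k E U) (fun w => f (g * w))
      - iterAvg (selectionChain sel k E U) f| ≤ ε / θ + (1 - θ) ^ k * c := by
  induction k generalizing E U g f with
  | zero =>
    have := hfc (g * 1) 1
    simp only [selectionChain, iterAvg_nil, pow_zero, one_mul]
    linarith [div_nonneg hε hθ.le]
  | succ k ih =>
    set F := sel E U
    set L := selectionChain sel k (F⁻¹ * E * F) (conjNhd F U)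
    have hU' : conjNhd F U ∈ 𝓝 (1 : G) := conjNhd_mem_nhds F hU
    -- for `x, y ∈ F` this is the same problem one level down, for `f (x * ·)` translated by
    -- `x⁻¹ * g * y ∈ F⁻¹ * E * F`
    have hb : ∀ x ∈ F, ∀ y ∈ F, |iterAvg L (fun w => f (g * (y * w)))
        - iterAvg L (fun w => f (x * w))| ≤ ε / θ + (1 - θ) ^ k * c := fun x hx y hy => by
      have := ih hU' (mul_mem_mul (mul_mem_mul (inv_mem_inv hx) hg) hy) (f := fun w => f (x * w))
        (fun w w' hww' => hfU _ _ <| by simpa [mul_assoc] using conj_mem_of_mem_conjNhd hx hww')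
        fun _ _ => hfc _ _
      have hxgy : ∀ w, x * (x⁻¹ * g * y * w) = g * (y * w) := fun w => by group
      simpa only [hxgy] using this
    calc _ ≤ ε + (1 - θ) * (ε / θ + (1 - θ) ^ k * c) :=
          abs_iterAvg_cons_translate_sub_le (hsel E U hU).1 (hsel.nonempty_of_mem_chain k hU') hε
            ((hsel E U hU).2 g hg) hfU hb
      _ = ε / θ + (1 - θ) ^ (k + 1) * c := by field_simp; ring

end Group

instance Filter.isCodirectedOrder_mem {α : Type*} (l : Filter α) :
    IsCodirectedOrder {s // s ∈ l} :=
  ⟨fun s t => ⟨⟨s.1 ∩ t.1, inter_mem s.2 t.2⟩, Set.inter_subset_left, Set.inter_subset_right⟩⟩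

instance Filter.nonempty_mem {α : Type*} (l : Filter α) : Nonempty {s // s ∈ l} :=
  ⟨⟨Set.univ, univ_mem⟩⟩

lemma IsMatchingSelection.tendsto_iterAvg_translate_sub {G : Type*} [Group G] [DecidableEq G]
    [TopologicalSpace G] [ContinuousMul G] {sel : Finset G → Set G → Finset G} {θ : ℝ}
    (hsel : IsMatchingSelection θ sel) (hθ0 : 0 < θ) (hθ1 : θ ≤ 1) {f : G → ℝ} (hf : f ∈ RUCb G)
    (g : G) :
    Tendsto (fun i : Finset G × {U : Set G // U ∈ 𝓝 (1 : G)} × ℕ =>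
        iterAvg (selectionChain sel i.2.2 i.1 i.2.1) (fun x => f (g * x))
          - iterAvg (selectionChain sel i.2.2 i.1 i.2.1) f)
      (atTop ×ˢ atBot ×ˢ atTop) (𝓝 0) := by
  obtain ⟨⟨C, hC⟩, hfU⟩ := hf
  have hfc : ∀ x y, |f x - f y| ≤ 2 * C := fun x y =>
    (abs_sub _ _).trans (by linarith [hC x, hC y])
  rw [Metric.tendsto_nhds]
  intro δ hδ
  obtain ⟨U₀, hU₀, hfU₀⟩ := hfU (θ * (δ / 2)) (by positivity)
  have hk : ∀ᶠ k in atTop, (1 - θ) ^ k * (2 * C) < δ / 2 := by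
    have := (tendsto_pow_atTop_nhds_zero_of_lt_one (sub_nonneg.2 hθ1) (by linarith)).mul_const
      (2 * C)
    rw [zero_mul] at this
    exact this.eventually (gt_mem_nhds (half_pos hδ))
  filter_upwards [(eventually_ge_atTop {g}).prod_mk
    ((eventually_le_atBot ⟨U₀, hU₀⟩).prod_mk hk)] with ⟨E, U, k⟩ ⟨hgE, hUU₀, hk⟩
  rw [Real.dist_eq, sub_zero]
  calc _ ≤ θ * (δ / 2) / θ + (1 - θ) ^ k * (2 * C) :=
        hsel.abs_iterAvg_translate_sub_le hθ0 k U.2 (hgE (mem_singleton_self g)) (by positivity)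
          (fun x y hxy => hfU₀ x y (hUU₀ hxy)) hfc
    _ < δ := by rw [mul_div_cancel_left₀ _ hθ0.ne']; linarith

theorem stmt_10_general (G : Type*) [Group G] [TopologicalSpace G] [IsTopologicalGroup G]
    [DecidableEq G] (θ : ℝ) (hθ : θ ∈ Set.Ioo (0:ℝ) 1)
    (h : ∀ E : Finset G, ∀ U ∈ nhds (1 : G),
      ∃ F : Finset G, F.Nonempty ∧
        ∀ g ∈ E, θ * F.card ≤ (matchNum F (F.image (fun x => g * x)) U : ℝ)) :
    TopAmenable G := by
  obtain ⟨sel, hsel⟩ : ∃ sel : Finset G → Set G → Finset G, IsMatchingSelection θ sel := by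
    classical
    exact ⟨fun E U => if hU : U ∈ 𝓝 (1 : G) then (h E U hU).choose else ∅,
      fun E U hU => by simpa only [hU, dite_true] using (h E U hU).choose_spec⟩
  exact topAmenable_of_tendsto_translate_sub (atTop ×ˢ atBot ×ˢ atTop)
    (fun i : Finset G × {U : Set G // U ∈ 𝓝 (1 : G)} × ℕ =>
      iterAvg (selectionChain sel i.2.2 i.1 i.2.1))
    (fun _ => iterAvg_mono _)
    (fun i => iterAvg_one (hsel.nonempty_of_mem_chain i.2.2 i.2.1.2))
    fun f hf g => hsel.tendsto_iterAvg_translate_sub hθ.1 hθ.2.le hf g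

/-- If for some `θ ∈ (0,1)`, every finite `E ⊆ G` and identity neighborhood `U` admit a
finite nonempty `F ⊆ G` with `μ(F, gF, U) ≥ θ|F|` for all `g ∈ E`, then the Hausdorff
topological group `G` is amenable. -/
theorem stmt_10 (G : Type*) [Group G] [TopologicalSpace G] [IsTopologicalGroup G] [T2Space G]
    [DecidableEq G] (θ : ℝ) (hθ : θ ∈ Set.Ioo (0:ℝ) 1)
    (h : ∀ E : Finset G, ∀ U ∈ nhds (1 : G),
      ∃ F : Finset G, F.Nonempty ∧
        ∀ g ∈ E, θ * F.card ≤ (matchNum F (F.image (fun x => g * x)) U : ℝ)) :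
    TopAmenable G :=
  stmt_10_general G θ hθ h
end

section
/- Let G be an amenable Hausdorff topological group. Then every bounded action of G by affine homeomorphisms on a bounded convex subset of a locally convex topological vector space has approximate fixed points: there is a net (x_ι) in C with x_ι − g x_ι → 0 for every g ∈ G. -/
/-! If finitely many `g ∈ F` had no common approximate fixed point in `C`, the convex set of
displacement vectors `(x - g x)_{g ∈ F}`, `x ∈ C`, would miss a neighbourhood of `0` in `X^F`, and
Hahn–Banach would give functionals `φ_g` and `u < 0` with `∑_g φ_g (x - g x) < u` on `C`.
Evaluating along the orbit of a point `x₀` turns the left side into `∑_g (f_g a - f_g (g a))` with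
`f_g a = φ_g (a x₀)`; boundedness of the action makes each `f_g` right uniformly continuous, so the
invariant mean of this function is `0`, while positivity forces it to be at most `u`. The sets of
such approximate fixed points, over all finite `F` and zero neighbourhoods `N`, then form a filter
base on `C`. -/

open Filter Set Topology

section Mean

variable {α : Type*} {p : Submodule ℝ (α → ℝ)} {m : (α → ℝ) → ℝ}

namespace IsMeanOn

theorem map_zero (hm : IsMeanOn α p m) : m 0 = 0 := by
  simpa using hm.2.2.1 0 0 p.zero_mem

theorem map_sub (hm : IsMeanOn α p m) {f g : α → ℝ} (hf : f ∈ p) (hg : g ∈ p) :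
    m (f - g) = m f - m g := by
  rw [sub_eq_add_neg, ← neg_one_smul ℝ g, hm.2.1 f hf _ (p.smul_mem _ hg), hm.2.2.1 _ g hg]
  ring

theorem map_sum (hm : IsMeanOn α p m) {ι : Type*} (s : Finset ι) {f : ι → α → ℝ}
    (hf : ∀ i ∈ s, f i ∈ p) : m (∑ i ∈ s, f i) = ∑ i ∈ s, m (f i) := by
  classical
  induction s using Finset.induction_on with
  | empty => simpa using hm.map_zero
  | insert a s ha ih =>
    have hs : ∀ i ∈ s, f i ∈ p := fun i hi => hf i (Finset.mem_insert_of_mem hi)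
    rw [Finset.sum_insert ha, Finset.sum_insert ha,
      hm.2.1 _ (hf a (Finset.mem_insert_self a s)) _ (p.sum_mem hs), ih hs]

theorem map_const (hm : IsMeanOn α p m) (h1 : (fun _ => 1) ∈ p) (c : ℝ) :
    m (fun _ => c) = c := by
  have hc : (c • fun _ : α => (1 : ℝ)) = fun _ => c := funext fun _ => mul_one c
  rw [← hc, hm.2.2.1 c _ h1, hm.1, mul_one]

theorem le_of_forall_le (hm : IsMeanOn α p m) (h1 : (fun _ => 1) ∈ p) {f : α → ℝ} (hf : f ∈ p)
    {c : ℝ} (h : ∀ x, f x ≤ c) : m f ≤ c := by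
  have hc : (fun _ => c) ∈ p := by
    simpa only [Pi.smul_def, smul_eq_mul, mul_one] using p.smul_mem c h1
  have := hm.2.2.2 _ (p.sub_mem hc hf) fun x => sub_nonneg.2 (h x)
  rw [hm.map_sub hc hf, hm.map_const h1] at this
  linarith

end IsMeanOn

end Mean

section RUCb

variable {G : Type*} [Group G] [TopologicalSpace G]

theorem const_mem_RUCb (c : ℝ) : (fun _ : G => c) ∈ RUCb G :=
  ⟨⟨|c|, fun _ => le_rfl⟩, fun ε hε => ⟨univ, univ_mem, fun _ _ _ => by simpa using hε.le⟩⟩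

theorem add_mem_RUCb {f g : G → ℝ} (hf : f ∈ RUCb G) (hg : g ∈ RUCb G) : f + g ∈ RUCb G := by
  obtain ⟨⟨Cf, hCf⟩, hf⟩ := hf
  obtain ⟨⟨Cg, hCg⟩, hg⟩ := hg
  refine ⟨⟨Cf + Cg, fun x => (abs_add_le _ _).trans (add_le_add (hCf x) (hCg x))⟩, fun ε hε => ?_⟩
  obtain ⟨U, hU, hfU⟩ := hf (ε / 2) (half_pos hε)
  obtain ⟨V, hV, hgV⟩ := hg (ε / 2) (half_pos hε)
  refine ⟨U ∩ V, inter_mem hU hV, fun x y hxy => ?_⟩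
  calc |(f + g) x - (f + g) y| = |(f x - f y) + (g x - g y)| := by simp only [Pi.add_apply]; ring_nf
    _ ≤ |f x - f y| + |g x - g y| := abs_add_le _ _
    _ ≤ ε := by linarith [hfU x y hxy.1, hgV x y hxy.2]

theorem smul_mem_RUCb (c : ℝ) {f : G → ℝ} (hf : f ∈ RUCb G) : c • f ∈ RUCb G := by
  obtain ⟨⟨B, hB⟩, hf⟩ := hf
  refine ⟨⟨|c| * B, fun x => ?_⟩, fun ε hε => ?_⟩
  · simpa [abs_mul] using mul_le_mul_of_nonneg_left (hB x) (abs_nonneg c)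
  · obtain ⟨U, hU, hfU⟩ := hf (ε / (|c| + 1)) (by positivity)
    refine ⟨U, hU, fun x y hxy => ?_⟩
    have hc : |c| / (|c| + 1) ≤ 1 := (div_le_one (by positivity)).2 (by linarith)
    calc |(c • f) x - (c • f) y| = |c| * |f x - f y| := by
          simp only [Pi.smul_apply, smul_eq_mul, ← mul_sub, abs_mul]
      _ ≤ |c| * (ε / (|c| + 1)) := mul_le_mul_of_nonneg_left (hfU x y hxy) (abs_nonneg c)
      _ = |c| / (|c| + 1) * ε := by ring
      _ ≤ ε := mul_le_of_le_one_left hε.le hc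

variable (G) in
def rucbSubmodule : Submodule ℝ (G → ℝ) where
  carrier := RUCb G
  zero_mem' := const_mem_RUCb 0
  add_mem' := add_mem_RUCb
  smul_mem' := smul_mem_RUCb

theorem comp_mul_left_mem_RUCb [ContinuousMul G] {f : G → ℝ} (hf : f ∈ RUCb G) (g : G) :
    (fun x => f (g * x)) ∈ RUCb G := by
  obtain ⟨⟨B, hB⟩, hf⟩ := hf
  refine ⟨⟨B, fun x => hB _⟩, fun ε hε => ?_⟩
  obtain ⟨U, hU, hfU⟩ := hf ε hε
  have hconj : Tendsto (fun z : G => g * z * g⁻¹) (𝓝 1) (𝓝 1) := by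
    simpa using ((continuous_const_mul g).mul_const g⁻¹).tendsto 1
  exact ⟨_, hconj hU, fun x y hxy => hfU _ _ (by simpa [mul_assoc] using hxy)⟩

theorem exists_lt_sum_sub_comp_mul_left [ContinuousMul G] {m : (G → ℝ) → ℝ}
    (hm : IsMeanOn G (RUCb G) m) (hinv : ∀ f ∈ RUCb G, ∀ g : G, m (fun x => f (g * x)) = m f)
    {ι : Type*} [Fintype ι] {f : ι → G → ℝ} (hf : ∀ i, f i ∈ RUCb G) (g : ι → G)
    {u : ℝ} (hu : u < 0) : ∃ a, u < ∑ i, (f i a - f i (g i * a)) := by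
  by_contra! h
  have hm' : IsMeanOn G (rucbSubmodule G) m := hm
  have hmem : ∀ i, f i - (fun x => f i (g i * x)) ∈ rucbSubmodule G :=
    fun i => sub_mem (hf i) (comp_mul_left_mem_RUCb (hf i) (g i))
  have hzero : m (∑ i, (f i - fun x => f i (g i * x))) = 0 := by
    rw [hm'.map_sum _ fun i _ => hmem i]
    refine Finset.sum_eq_zero fun i _ => ?_
    rw [hm'.map_sub (hf i) (comp_mul_left_mem_RUCb (hf i) (g i)), hinv _ (hf i), sub_self]
  have := hm'.le_of_forall_le (const_mem_RUCb 1) (sum_mem fun i _ => hmem i) (c := u)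
    fun a => by simpa using h a
  linarith

end RUCb

theorem Filter.exists_neBot_le_principal_forall_tendsto {α ι Y : Type*} {s : Set α}
    {f : ι → α → Y} {L : Filter Y} (h : ∀ F : Finset ι, ∀ N ∈ L, ∃ x ∈ s, ∀ i ∈ F, f i x ∈ N) :
    ∃ l : Filter α, l.NeBot ∧ l ≤ 𝓟 s ∧ ∀ i, Tendsto (f i) l L := by
  refine ⟨(⨅ i, comap (f i) L) ⊓ 𝓟 s, ?_, inf_le_right,
    fun i => tendsto_iff_comap.2 (inf_le_left.trans (iInf_le _ i))⟩
  rw [inf_principal_neBot_iff]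
  intro U hU
  obtain ⟨I, hI, V, hV, rfl⟩ := mem_iInf.1 hU
  choose N hN hNV using fun i : I => mem_comap.1 (hV i)
  have : Finite I := hI.to_subtype
  obtain ⟨x, hxs, hx⟩ := h hI.toFinset (⋂ i, N i) (iInter_mem.2 hN)
  exact ⟨x, mem_iInter.2 fun i => hNV i (mem_iInter.1 (hx i (hI.mem_toFinset.2 i.2)) i), hxs⟩

section Action

variable {X : Type*} [AddCommGroup X] [Module ℝ X]

theorem Convex.image_displacements {ι : Type*} {C : Set X} (hC : Convex ℝ C) {T : ι → X → X}
    (haff : ∀ i, ∀ x ∈ C, ∀ y ∈ C, ∀ t : ℝ, 0 ≤ t → t ≤ 1 →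
      T i (t • x + (1 - t) • y) = t • T i x + (1 - t) • T i y) :
    Convex ℝ ((fun x i => x - T i x) '' C) := by
  rintro _ ⟨x, hx, rfl⟩ _ ⟨y, hy, rfl⟩ s t hs ht hst
  obtain rfl : t = 1 - s := by linarith
  refine ⟨s • x + (1 - s) • y, hC hx hy hs ht hst, funext fun i => ?_⟩
  simp only [Pi.add_apply, Pi.smul_apply, haff i x hx y hy s hs (by linarith)]
  module

variable [TopologicalSpace X]

theorem exists_sum_apply_lt_of_zero_notMem_closure [IsTopologicalAddGroup X] [ContinuousSMul ℝ X]
    [LocallyConvexSpace ℝ X] {ι : Type*} [Fintype ι] [DecidableEq ι] {D : Set (ι → X)}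
    (hD : Convex ℝ D) (h0 : 0 ∉ closure D) :
    ∃ φ : ι → X →L[ℝ] ℝ, ∃ u < 0, ∀ v ∈ D, ∑ i, φ i (v i) < u := by
  obtain ⟨Φ, u, hΦ, hu⟩ := geometric_hahn_banach_closed_point hD.closure isClosed_closure h0
  refine ⟨fun i => Φ.comp (.single ℝ (fun _ => X) i), u, by simpa using hu, fun v hv => ?_⟩
  rw [ContinuousLinearMap.sum_comp_single]
  exact hΦ v (subset_closure hv)

variable {G : Type*} [Group G] [TopologicalSpace G] {C : Set X} {ρ : G → X → X}

theorem orbit_apply_mem_RUCb (hCbdd : Bornology.IsVonNBounded ℝ C)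
    (hmaps : ∀ g : G, MapsTo (ρ g) C C) (hmul : ∀ g h : G, ∀ x ∈ C, ρ (g * h) x = ρ g (ρ h x))
    (hbdd : ∀ N ∈ 𝓝 (0 : X), ∃ U ∈ 𝓝 (1 : G), ∀ g ∈ U, ∀ x ∈ C, ρ g x - x ∈ N)
    {x₀ : X} (hx₀ : x₀ ∈ C) (ψ : X →L[ℝ] ℝ) : (fun a => ψ (ρ a x₀)) ∈ RUCb G := by
  constructor
  · obtain ⟨B, hB⟩ :=
      isBounded_iff_forall_norm_le.1 ((NormedSpace.isVonNBounded_iff ℝ).1 (hCbdd.image ψ))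
    exact ⟨B, fun a => hB _ (mem_image_of_mem ψ (hmaps a hx₀))⟩
  · intro ε hε
    have hN : ψ ⁻¹' Metric.closedBall 0 ε ∈ 𝓝 (0 : X) :=
      ψ.continuous.continuousAt.preimage_mem_nhds (by simpa using Metric.closedBall_mem_nhds 0 hε)
    obtain ⟨U, hU, hρU⟩ := hbdd _ hN
    refine ⟨U, hU, fun x y hxy => ?_⟩
    have hx : ρ x x₀ = ρ (x * y⁻¹) (ρ y x₀) := by rw [← hmul _ _ _ hx₀, inv_mul_cancel_right]
    simpa [hx, map_sub] using hρU _ hxy _ (hmaps y hx₀)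

theorem exists_forall_sub_apply_mem_of_isMeanOn [IsTopologicalAddGroup X] [ContinuousSMul ℝ X]
    [LocallyConvexSpace ℝ X] [ContinuousMul G] {m : (G → ℝ) → ℝ} (hm : IsMeanOn G (RUCb G) m)
    (hinv : ∀ f ∈ RUCb G, ∀ g : G, m (fun x => f (g * x)) = m f)
    (hCne : C.Nonempty) (hConv : Convex ℝ C) (hCbdd : Bornology.IsVonNBounded ℝ C)
    (hmaps : ∀ g : G, MapsTo (ρ g) C C) (hmul : ∀ g h : G, ∀ x ∈ C, ρ (g * h) x = ρ g (ρ h x))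
    (haff : ∀ g : G, ∀ x ∈ C, ∀ y ∈ C, ∀ t : ℝ, 0 ≤ t → t ≤ 1 →
      ρ g (t • x + (1 - t) • y) = t • ρ g x + (1 - t) • ρ g y)
    (hbdd : ∀ N ∈ 𝓝 (0 : X), ∃ U ∈ 𝓝 (1 : G), ∀ g ∈ U, ∀ x ∈ C, ρ g x - x ∈ N)
    (F : Finset G) {N : Set X} (hN : N ∈ 𝓝 0) : ∃ x ∈ C, ∀ g ∈ F, x - ρ g x ∈ N := by
  classical
  obtain ⟨x₀, hx₀⟩ := hCne
  by_contra! hfar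
  set D := (fun x (g : F) => x - ρ g x) '' C
  have h0 : (0 : F → X) ∉ closure D := fun h => by
    obtain ⟨_, hv, x, hx, rfl⟩ :=
      mem_closure_iff_nhds.1 h (univ.pi fun _ => N) (set_pi_mem_nhds finite_univ fun _ _ => hN)
    obtain ⟨g, hg, hgN⟩ := hfar x hx
    exact hgN (hv ⟨g, hg⟩ (mem_univ _))
  obtain ⟨φ, u, hu, hφ⟩ := exists_sum_apply_lt_of_zero_notMem_closure
    (hConv.image_displacements fun g : F => haff g) h0
  obtain ⟨a, ha⟩ := exists_lt_sum_sub_comp_mul_left hm hinv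
    (fun g => orbit_apply_mem_RUCb hCbdd hmaps hmul hbdd hx₀ (φ g)) (fun g : F => (g : G)) hu
  refine (hφ _ ⟨ρ a x₀, hmaps a hx₀, rfl⟩).not_gt ?_
  simpa [hmul _ _ _ hx₀] using ha

end Action

theorem stmt_12_general (G : Type*) [Group G] [TopologicalSpace G] [IsTopologicalGroup G]
    (hG : TopAmenable G)
    (X : Type*) [AddCommGroup X] [Module ℝ X] [TopologicalSpace X]
    [IsTopologicalAddGroup X] [ContinuousSMul ℝ X] [LocallyConvexSpace ℝ X]
    (C : Set X) (hCne : C.Nonempty) (hConv : Convex ℝ C)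
    (hCbdd : Bornology.IsVonNBounded ℝ C)
    (ρ : G → X → X)
    (hmaps : ∀ g : G, Set.MapsTo (ρ g) C C)
    (hmul : ∀ g h : G, ∀ x ∈ C, ρ (g * h) x = ρ g (ρ h x))
    (haff : ∀ g : G, ∀ x ∈ C, ∀ y ∈ C, ∀ t : ℝ, 0 ≤ t → t ≤ 1 →
      ρ g (t • x + (1 - t) • y) = t • ρ g x + (1 - t) • ρ g y)
    (hbdd : ∀ N ∈ nhds (0 : X), ∃ U ∈ nhds (1 : G), ∀ g ∈ U, ∀ x ∈ C, ρ g x - x ∈ N) :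
    ∃ l : Filter X, l.NeBot ∧ l ≤ Filter.principal C ∧
      ∀ g : G, Filter.Tendsto (fun x => x - ρ g x) l (nhds (0 : X)) := by
  obtain ⟨m, hm, hinv⟩ := hG
  exact exists_neBot_le_principal_forall_tendsto fun F N hN =>
    exists_forall_sub_apply_mem_of_isMeanOn hm hinv hCne hConv hCbdd hmaps hmul haff hbdd F hN

/-- Every bounded action of an amenable Hausdorff topological group by affine homeomorphisms
on a nonempty bounded convex subset of a locally convex space has approximate fixed points. -/
theorem stmt_12 (G : Type*) [Group G] [TopologicalSpace G] [IsTopologicalGroup G] [T2Space G]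
    (hG : TopAmenable G)
    (X : Type*) [AddCommGroup X] [Module ℝ X] [TopologicalSpace X]
    [IsTopologicalAddGroup X] [ContinuousSMul ℝ X] [LocallyConvexSpace ℝ X]
    (C : Set X) (hCne : C.Nonempty) (hConv : Convex ℝ C)
    (hCbdd : Bornology.IsVonNBounded ℝ C)
    (ρ : G → X → X)
    (hmaps : ∀ g : G, Set.MapsTo (ρ g) C C)
    (hone : ∀ x ∈ C, ρ 1 x = x)
    (hmul : ∀ g h : G, ∀ x ∈ C, ρ (g * h) x = ρ g (ρ h x))
    (hcont : ∀ g : G, ContinuousOn (ρ g) C)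
    (haff : ∀ g : G, ∀ x ∈ C, ∀ y ∈ C, ∀ t : ℝ, 0 ≤ t → t ≤ 1 →
      ρ g (t • x + (1 - t) • y) = t • ρ g x + (1 - t) • ρ g y)
    (hbdd : ∀ N ∈ nhds (0 : X), ∃ U ∈ nhds (1 : G), ∀ g ∈ U, ∀ x ∈ C, ρ g x - x ∈ N) :
    ∃ l : Filter X, l.NeBot ∧ l ≤ Filter.principal C ∧
      ∀ g : G, Filter.Tendsto (fun x => x - ρ g x) l (nhds (0 : X)) :=
  stmt_12_general G hG X C hCne hConv hCbdd ρ hmaps hmul haff hbdd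
end

section
/- Let a group G act on a nonempty set X. A mean μ on ℓ∞(X) is G-invariant if and only if it is invariant under the wobbling group W(G,X) of the action. -/
/-- The bounded real functions on `X` (the space `ℓ∞(X)`). -/
def Bdd (X : Type*) : Set (X → ℝ) := {f : X → ℝ | ∃ C, ∀ x, |f x| ≤ C}

/-! Choose for each `x` an element `c x` of the finite set `E` with `γ x = c x • x`. Cutting `X`
into the fibres of `c` writes `f ∘ γ` as a finite sum whose piece on `c ⁻¹' {g}` is the
translate by `g` of `f` cut down to `γ '' (c ⁻¹' {g})`. These images again partition `X`, so
additivity and `G`-invariance of the mean give `m (f ∘ γ) = m f`. -/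

namespace Bdd

variable {X : Type*}

theorem zero_mem : (0 : X → ℝ) ∈ Bdd X := ⟨0, by simp⟩

theorem add_mem {f g : X → ℝ} (hf : f ∈ Bdd X) (hg : g ∈ Bdd X) : f + g ∈ Bdd X := by
  obtain ⟨C, hC⟩ := hf
  obtain ⟨D, hD⟩ := hg
  exact ⟨C + D, fun x => (abs_add_le _ _).trans (add_le_add (hC x) (hD x))⟩

def addSubmonoid (X : Type*) : AddSubmonoid (X → ℝ) where
  carrier := Bdd X
  zero_mem' := zero_mem
  add_mem' := add_mem

theorem comp_mem {Y : Type*} {f : X → ℝ} (hf : f ∈ Bdd X) (φ : Y → X) : f ∘ φ ∈ Bdd Y := by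
  obtain ⟨C, hC⟩ := hf
  exact ⟨C, fun y => hC (φ y)⟩

theorem indicator_mem {f : X → ℝ} (hf : f ∈ Bdd X) (s : Set X) : s.indicator f ∈ Bdd X := by
  obtain ⟨C, hC⟩ := hf
  refine ⟨C, fun x => ?_⟩
  simpa only [Real.norm_eq_abs] using (norm_indicator_le_norm_self f x).trans (hC x)

end Bdd

theorem map_sum_of_map_add {M N ι : Type*} [AddCommMonoid M] [AddCommGroup N]
    (D : AddSubmonoid M) (m : M → N) (hadd : ∀ f ∈ D, ∀ g ∈ D, m (f + g) = m f + m g)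
    (s : Finset ι) (F : ι → M) (hF : ∀ i ∈ s, F i ∈ D) :
    m (∑ i ∈ s, F i) = ∑ i ∈ s, m (F i) := by
  classical
  induction s using Finset.induction_on with
  | empty =>
    simpa using hadd 0 D.zero_mem 0 D.zero_mem
  | insert a s ha ih =>
    rw [Finset.forall_mem_insert] at hF
    rw [Finset.sum_insert ha, Finset.sum_insert ha,
      hadd _ hF.1 _ (D.sum_mem hF.2), ih hF.2]

theorem Finset.sum_indicator_fiber {X ι M : Type*} [AddCommMonoid M] (s : Finset ι)
    (c : X → ι) (hc : ∀ x, c x ∈ s) (f : X → M) :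
    ∑ i ∈ s, (c ⁻¹' {i}).indicator f = f := by
  classical
  ext x
  simp [Set.indicator_apply, hc x]

/-- Membership in the wobbling group `W(G, X)`. -/
def IsWobbling (G : Type*) {X : Type*} [SMul G X] (γ : Equiv.Perm X) : Prop :=
  ∃ E : Finset G, ∀ x : X, ∃ g ∈ E, γ x = g • x

theorem isWobbling_toPerm {G X : Type*} [Group G] [MulAction G X] (g : G) :
    IsWobbling G (MulAction.toPerm g : Equiv.Perm X) :=
  ⟨{g}, fun _ => ⟨g, Finset.mem_singleton_self g, rfl⟩⟩

/-- On the fibre of `c` over `g` the permutation `γ` acts as `g`, and `γ` maps that fibre onto the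
fibre of `c ∘ γ⁻¹` over `g`. -/
theorem indicator_fiber_comp_perm {G X : Type*} [Group G] [MulAction G X] (γ : Equiv.Perm X)
    (c : X → G) (hc : ∀ x, γ x = c x • x) (g : G) (f : X → ℝ) :
    (c ⁻¹' {g}).indicator (f ∘ γ) = (fun x => ((c ∘ γ.symm) ⁻¹' {g}).indicator f (g • x)) := by
  ext x
  by_cases hx : c x = g
  · have : γ.symm (g • x) = x := by rw [Equiv.symm_apply_eq, hc, hx]
    simp [hx, this, hc x]
  · have : c (γ.symm (g • x)) ≠ g := fun hy => hx <| by
      have := hc (γ.symm (g • x))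
      rw [Equiv.apply_symm_apply, hy, smul_left_cancel_iff] at this
      exact (congrArg c this).trans hy
    simp [hx, this]

theorem map_comp_eq_of_isWobbling {G X : Type*} [Group G] [MulAction G X] (m : (X → ℝ) → ℝ)
    (hadd : ∀ f ∈ Bdd X, ∀ g ∈ Bdd X, m (f + g) = m f + m g)
    (hinv : ∀ f ∈ Bdd X, ∀ g : G, m (fun x => f (g • x)) = m f)
    {f : X → ℝ} (hf : f ∈ Bdd X) {γ : Equiv.Perm X} (hγ : IsWobbling G γ) :
    m (f ∘ γ) = m f := by
  obtain ⟨E, hE⟩ := hγ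
  choose c hcE hc using hE
  have hmap := map_sum_of_map_add (Bdd.addSubmonoid X) m hadd E
  calc m (f ∘ γ) = m (∑ g ∈ E, (c ⁻¹' {g}).indicator (f ∘ γ)) := by
        rw [Finset.sum_indicator_fiber E c hcE]
    _ = ∑ g ∈ E, m (((c ∘ γ.symm) ⁻¹' {g}).indicator f) := by
        rw [hmap _ fun g _ => Bdd.indicator_mem (Bdd.comp_mem hf γ) _]
        refine Finset.sum_congr rfl fun g _ => ?_
        rw [indicator_fiber_comp_perm γ c hc]
        exact hinv _ (Bdd.indicator_mem hf _) g
    _ = m f := by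
        rw [← hmap _ fun g _ => Bdd.indicator_mem hf _,
          Finset.sum_indicator_fiber E (c ∘ γ.symm) fun x => hcE _]

theorem stmt_13_general {G X : Type*} [Group G] [MulAction G X]
    (m : (X → ℝ) → ℝ) (hm : IsMeanOn X (Bdd X) m) :
    (∀ f ∈ Bdd X, ∀ g : G, m (fun x => f (g • x)) = m f) ↔
      (∀ f ∈ Bdd X, ∀ γ : Equiv.Perm X,
        (∃ E : Finset G, ∀ x : X, ∃ g ∈ E, γ x = g • x) →
        m (fun x => f (γ x)) = m f) :=
  ⟨fun hinv _ hf _ hγ => map_comp_eq_of_isWobbling m hm.2.1 hinv hf hγ,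
    fun hW f hf g => hW f hf _ (isWobbling_toPerm g)⟩

/-- A mean on `ℓ∞(X)` is invariant under a group action `(G, X)` iff it is invariant under
the wobbling group `W(G, X)` of the action. -/
theorem stmt_13 {G X : Type*} [Group G] [MulAction G X] [Nonempty X]
    (m : (X → ℝ) → ℝ) (hm : IsMeanOn X (Bdd X) m) :
    (∀ f ∈ Bdd X, ∀ g : G, m (fun x => f (g • x)) = m f) ↔
      (∀ f ∈ Bdd X, ∀ γ : Equiv.Perm X,
        (∃ E : Finset G, ∀ x : X, ∃ g ∈ E, γ x = g • x) →
        m (fun x => f (γ x)) = m f) :=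
  stmt_13_general m hm
end

section
/- Let G be a precompact topological group. Then for every identity neighborhood U there exists a map α : G → Sym(G) with α(g)(h) ∈ U g h for all g, h ∈ G, such that the subgroup of Sym(G) generated by {α(g) | g ∈ G} is finite. -/
/-!
A precompact group has a base of conjugation-invariant identity neighbourhoods, so take such a
symmetric `W` with `W⁴ ⊆ U` and a net `E` (`G = W E`) of minimal size. For infinite `G`, split
`G` into pieces `P y ⊆ W y` (`y ∈ E`), all of cardinality `|G|`; this identifies `G` with
`E × G`. Minimality of `E` and Hall's marriage theorem give, for each `g`, a permutation `σ g`
of `E` such that `g • P y` meets `P (σ g y)`, and then `α g := σ g × id` moves every `h` to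
within `W⁴ g h`. All `α g` lie in the image of the finite group `Perm E`.
-/

/-- A topological group is precompact if every identity neighborhood `U` satisfies `UF = G`
for some finite `F ⊆ G`. -/
def PrecompactGroup (G : Type*) [Group G] [TopologicalSpace G] : Prop :=
  ∀ U ∈ nhds (1 : G), ∃ F : Finset G, ∀ x : G, ∃ u ∈ U, ∃ y ∈ F, x = u * y

universe u

namespace Cardinal

theorem exists_mk_le_of_subset_iUnion {α ι : Type u} [Finite ι] {s : Set α} (hs : ℵ₀ ≤ #s)
    (t : ι → Set α) (hst : s ⊆ ⋃ i, t i) : ∃ i, #s ≤ #(t i) := by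
  choose j hj using fun x : s => Set.mem_iUnion.mp (hst x.2)
  have hcof : #ι < (#s).ord.cof :=
    (lt_aleph0_of_finite ι).trans_le
      (Ordinal.aleph0_le_cof_iff.mpr (Ordinal.one_lt_cof_iff.mpr (isSuccLimit_ord hs)))
  obtain ⟨i, hi⟩ := infinite_pigeonhole j hs hcof
  refine ⟨i, hi.symm.le.trans
    (mk_le_of_injective (f := fun x : j ⁻¹' {i} => ⟨x.1, ?_⟩) ?_)⟩
  · obtain ⟨y, hy⟩ := x
    exact hy ▸ hj y
  · intro x y hxy
    simpa [Subtype.ext_iff] using hxy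

theorem exists_label_le_mk_inter {α ι : Type u} [Finite ι] [Nonempty ι] {s : Set α}
    (hs : ℵ₀ ≤ #s) : ∃ label : α → ι, ∀ i, #s ≤ #↑(s ∩ label ⁻¹' {i}) := by
  classical
  have hprod : #s = #(s × ι) := by
    rw [mk_prod, lift_id, lift_id]
    exact (mul_eq_left hs ((lt_aleph0_of_finite ι).le.trans hs) (mk_ne_zero ι)).symm
  obtain ⟨e⟩ := Cardinal.eq.mp hprod
  refine ⟨fun x => if hx : x ∈ s then (e ⟨x, hx⟩).2 else Classical.arbitrary ι,
    fun i => ?_⟩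
  refine mk_le_of_injective (f := fun y : s => ⟨(e.symm (y, i)).1, (e.symm (y, i)).2, ?_⟩) ?_
  · simp
  · intro y z hyz
    simpa using congrArg (fun x : ↑(s ∩ _) => (e ⟨x.1, x.2.1⟩).1) hyz

theorem exists_label_mem_of_mk_eq {α ι : Type u} [Finite ι] (hα : ℵ₀ ≤ #α)
    (cells : ι → Set α) (hcov : ∀ x, ∃ i, x ∈ cells i) (hcard : ∀ i, #(cells i) = #α) :
    ∃ idx : α → ι, (∀ x, x ∈ cells (idx x)) ∧ ∀ i, #(idx ⁻¹' {i}) = #α := by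
  classical
  have : Nonempty α := mk_ne_zero_iff.mp (aleph0_pos.trans_le hα).ne'
  have : Nonempty ι := ⟨(hcov (Classical.arbitrary α)).choose⟩
  -- Sort points by the set `C x` of cells containing them: each cell `i` contains a class
  -- `{x | C x = S}` as large as `α`, which is then shared out among the cells in `S`.
  let C : α → Set ι := fun x => {i | x ∈ cells i}
  have hclass : ∀ i, ∃ S, i ∈ S ∧ #α ≤ #{x | C x = S} := by
    intro i
    obtain ⟨S, hS⟩ := exists_mk_le_of_subset_iUnion ((hcard i).symm ▸ hα)
      (fun S => cells i ∩ {x | C x = S}) fun x hx => Set.mem_iUnion.mpr ⟨C x, hx, rfl⟩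
    rw [hcard] at hS
    obtain ⟨x, hxi, rfl⟩ := mk_set_ne_zero_iff.mp (aleph0_pos.trans_le (hα.trans hS)).ne'
    exact ⟨C x, hxi, hS.trans (mk_le_mk_of_subset Set.inter_subset_right)⟩
  choose S hiS hS using hclass
  have hsplit : ∀ T : Set ι, ∃ label : α → ι, ℵ₀ ≤ #{x | C x = T} →
      ∀ i, #{x | C x = T} ≤ #↑({x | C x = T} ∩ label ⁻¹' {i}) := fun T => by
    by_cases h : ℵ₀ ≤ #{x | C x = T}
    · obtain ⟨label, hlabel⟩ := exists_label_le_mk_inter (ι := ι) h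
      exact ⟨label, fun _ => hlabel⟩
    · exact ⟨fun _ => Classical.arbitrary ι, fun h' => absurd h' h⟩
  choose label hlabel using hsplit
  refine ⟨fun x => if x ∈ cells (label (C x) x) then label (C x) x else (hcov x).choose,
    fun x => ?_, fun i => le_antisymm (mk_set_le _) ?_⟩
  · dsimp only
    split_ifs with h
    exacts [h, (hcov x).choose_spec]
  · refine (hS i).trans ((hlabel _ (hα.trans (hS i)) i).trans (mk_le_mk_of_subset ?_))
    rintro x ⟨hx, hlx⟩
    have hxi : x ∈ cells i := (Set.ext_iff.mp hx i).mpr (hiS i)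
    simp only [Set.mem_ofPred_eq] at hx
    simp only [Set.mem_preimage, Set.mem_singleton_iff] at hlx ⊢
    rw [hx, hlx, if_pos hxi]

end Cardinal

open Filter Topology Finset

namespace PrecompactGroup

variable {G : Type*} [Group G] [TopologicalSpace G] [IsTopologicalGroup G]

theorem eventually_forall_conj_mem (hpc : PrecompactGroup G) {U : Set G} (hU : U ∈ 𝓝 1) :
    ∀ᶠ v in 𝓝 (1 : G), ∀ g : G, g * v * g⁻¹ ∈ U := by
  have hconj : Tendsto (fun p : G × G => p.1 * p.2 * p.1⁻¹) (𝓝 1 ×ˢ 𝓝 1) (𝓝 1) := by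
    rw [← nhds_prod_eq]
    exact (by fun_prop : Continuous fun p : G × G => p.1 * p.2 * p.1⁻¹).tendsto' _ _ (by simp)
  obtain ⟨S, hS, hSU⟩ := mem_prod_self_iff.mp (hconj hU)
  obtain ⟨F, hF⟩ := hpc S hS
  have hF_conj : ∀ᶠ v in 𝓝 (1 : G), ∀ f ∈ F, f * v * f⁻¹ ∈ S := by
    refine (eventually_all_finset F).mpr fun f _ => ?_
    exact (by fun_prop : Continuous fun v : G => f * v * f⁻¹).tendsto' _ _ (by simp) hS
  filter_upwards [hF_conj] with v hv g
  obtain ⟨u, hu, f, hf, rfl⟩ := hF g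
  have : u * (f * v * f⁻¹) * u⁻¹ ∈ U := hSU (Set.mk_mem_prod hu (hv f hf))
  simpa [mul_assoc] using this

theorem exists_conj_invariant_nhds (hpc : PrecompactGroup G) {U : Set G} (hU : U ∈ 𝓝 1) :
    ∃ W ∈ 𝓝 (1 : G), W ⊆ U ∧ (∀ w ∈ W, w⁻¹ ∈ W) ∧
      ∀ g : G, ∀ w ∈ W, g * w * g⁻¹ ∈ W := by
  refine ⟨{w | ∀ g : G, g * w * g⁻¹ ∈ U ∩ U⁻¹},
    hpc.eventually_forall_conj_mem (inter_mem hU (inv_mem_nhds_one G hU)),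
    fun w hw => by simpa using (hw 1).1, fun w hw g => ?_, fun k w hw g => ?_⟩
  · have := hw g
    simp only [Set.mem_inter_iff, Set.mem_inv] at this ⊢
    simpa [mul_assoc, and_comm] using this
  · simpa [mul_assoc] using hw (g * k)

end PrecompactGroup

section Net

variable {G : Type u} [Group G]

def IsNet (W : Set G) (E : Finset G) : Prop :=
  ∀ x : G, ∃ y ∈ E, x * y⁻¹ ∈ W

theorem PrecompactGroup.exists_isNet_minimal [TopologicalSpace G] (hpc : PrecompactGroup G)
    {W : Set G} (hW : W ∈ 𝓝 1) : ∃ E, IsNet W E ∧ ∀ E', IsNet W E' → #E ≤ #E' := by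
  obtain ⟨F, hF⟩ := hpc W hW
  have hFnet : IsNet W F := fun x => by
    obtain ⟨u, hu, y, hy, rfl⟩ := hF x
    exact ⟨y, hy, by simpa⟩
  obtain ⟨E, hE, hmin⟩ := (measure Finset.card).wf.has_min {E | IsNet W E} ⟨F, hFnet⟩
  exact ⟨E, hE, fun E' hE' => not_lt.mp (hmin E' hE')⟩

open Cardinal in
theorem IsNet.exists_label {W : Set G} {E : Finset G} (hE : IsNet W E) (hG : ℵ₀ ≤ #G) :
    ∃ idx : G → E, (∀ x, x * (idx x : G)⁻¹ ∈ W) ∧ ∀ y, #(idx ⁻¹' {y}) = #G := by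
  let cells : E → Set G := fun y => Equiv.mulRight (y : G)⁻¹ ⁻¹' W
  have hcov : ∀ x, ∃ y, x ∈ cells y := fun x => by
    obtain ⟨y, hy, hxy⟩ := hE x
    exact ⟨⟨y, hy⟩, hxy⟩
  have hcells : ∀ y, #(cells y) = #W := fun y => mk_preimage_equiv _ _
  obtain ⟨y, hy⟩ := exists_mk_le_of_subset_iUnion (s := Set.univ) (mk_univ.symm ▸ hG) cells
    fun x _ => Set.mem_iUnion.mpr (hcov x)
  have hW : #W = #G :=
    le_antisymm (mk_set_le W) (mk_univ ▸ hcells y ▸ hy)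
  exact exists_label_mem_of_mk_eq hG cells hcov fun y => (hcells y).trans hW

theorem exists_perm_translate_of_minimal {W : Set G}
    (hWconj : ∀ g : G, ∀ w ∈ W, g * w * g⁻¹ ∈ W)
    {E : Finset G} (hmin : ∀ E', IsNet W E' → #E ≤ #E') (idx : G → E)
    (hidx : ∀ x, x * (idx x : G)⁻¹ ∈ W) (g : G) :
    ∃ σ : Equiv.Perm E, ∀ y, ∃ q, idx q = y ∧ idx (g * q) = σ y := by
  classical
  let r : E → E → Prop := fun y j => ∃ q, idx q = y ∧ idx (g * q) = j
  suffices ∃ f : E → E, Function.Injective f ∧ ∀ y, r y (f y) by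
    obtain ⟨f, hf, hr⟩ := this
    exact ⟨Equiv.ofBijective f (Finite.injective_iff_bijective.mp hf), hr⟩
  refine (Fintype.all_card_le_filter_rel_iff_exists_injective r).mp fun A => ?_
  set N : Finset E := {j | ∃ y ∈ A, r y j}
  -- Otherwise translating the labels of `A` by `g⁻¹` would give a smaller net.
  by_contra! hlt
  set B : Finset G := N.image (fun j : E => g⁻¹ * (j : G)) ∪ Aᶜ.image Subtype.val
  have hnet : IsNet W B := by
    intro x
    by_cases hx : idx x ∈ A
    · refine ⟨g⁻¹ * idx (g * x), mem_union_left _ (mem_image_of_mem _ ?_), ?_⟩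
      · exact mem_filter.mpr ⟨mem_univ _, idx x, hx, x, rfl, rfl⟩
      · simpa [mul_assoc] using hWconj g⁻¹ _ (hidx (g * x))
    · exact ⟨idx x, mem_union_right _ (mem_image_of_mem _ (mem_compl.mpr hx)), hidx x⟩
  have hcard : #B ≤ #N + (#E - #A) := by
    refine card_union_le _ _ |>.trans (add_le_add card_image_le (card_image_le.trans ?_))
    rw [card_compl, Fintype.card_coe]
  have hA : #A ≤ #E := Fintype.card_coe E ▸ card_le_univ A
  have := hmin _ hnet
  omega

theorem mul_inv_mem_of_idx_eq {W U : Set G} (hWinv : ∀ w ∈ W, w⁻¹ ∈ W)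
    (hWconj : ∀ g : G, ∀ w ∈ W, g * w * g⁻¹ ∈ W)
    (hWU : ∀ {a b c d}, a ∈ W → b ∈ W → c ∈ W → d ∈ W → a * b * c * d ∈ U)
    {E : Finset G} {idx : G → E} (hidx : ∀ x, x * (idx x : G)⁻¹ ∈ W) {g h q z : G}
    (hz : idx z = idx (g * q)) (hh : idx h = idx q) : z * (g * h)⁻¹ ∈ U := by
  have key : z * (g * h)⁻¹ = z * (idx z : G)⁻¹ * (g * q * (idx (g * q) : G)⁻¹)⁻¹ *
      (g * (q * (idx q : G)⁻¹) * g⁻¹) * (g * (h * (idx h : G)⁻¹)⁻¹ * g⁻¹) := by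
    rw [hz, hh]; group
  rw [key]
  exact hWU (hidx z) (hWinv _ (hidx _)) (hWconj g _ (hidx q)) (hWconj g _ (hWinv _ (hidx h)))

end Net

theorem Equiv.Perm.exists_hom_lift {X ι Y : Type*} (idx : X → ι)
    (e : ∀ i, {x // idx x = i} ≃ Y) :
    ∃ Φ : Equiv.Perm ι →* Equiv.Perm X, ∀ σ x, idx (Φ σ x) = σ (idx x) := by
  let θ : X ≃ ι × Y := (Equiv.sigmaFiberEquiv idx).symm.trans
    ((Equiv.sigmaCongrRight e).trans (Equiv.sigmaEquivProd ι Y))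
  have hθ : ∀ z, idx (θ.symm z) = z.1 := fun z => ((e z.1).symm z.2).2
  let H : Equiv.Perm ι →* Equiv.Perm (ι × Y) :=
    { toFun := fun σ => σ.prodCongr (Equiv.refl Y)
      map_one' := rfl
      map_mul' := fun _ _ => rfl }
  exact ⟨θ.symm.permCongrHom.toMonoidHom.comp H, fun σ x => hθ _⟩

/-- In a precompact topological group, for every identity neighborhood `U` there is a map
`α : G → Sym(G)` with `α(g)(h) ∈ Ugh` for all `g, h`, whose image generates a finite
subgroup of `Sym(G)`. -/
theorem stmt_15 (G : Type*) [Group G] [TopologicalSpace G] [IsTopologicalGroup G]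
    (hpc : PrecompactGroup G) :
    ∀ U ∈ nhds (1 : G), ∃ α : G → Equiv.Perm G,
      (∀ g h : G, α g h * (g * h)⁻¹ ∈ U) ∧
      Set.Finite ((Subgroup.closure (Set.range α) : Subgroup (Equiv.Perm G)) : Set (Equiv.Perm G)) := by
  intro U hU
  obtain _ | hG := finite_or_infinite G
  · exact ⟨Equiv.mulLeft, fun g h => by simpa using mem_of_mem_nhds hU, Set.toFinite _⟩
  obtain ⟨V, hV, hVU⟩ := exists_nhds_one_split4 hU
  obtain ⟨W, hW, hWV, hWinv, hWconj⟩ := hpc.exists_conj_invariant_nhds hV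
  have hWU : ∀ {a b c d}, a ∈ W → b ∈ W → c ∈ W → d ∈ W → a * b * c * d ∈ U :=
    fun ha hb hc hd => hVU (hWV ha) (hWV hb) (hWV hc) (hWV hd)
  obtain ⟨E, hE, hmin⟩ := hpc.exists_isNet_minimal hW
  obtain ⟨idx, hidx, hfib⟩ := hE.exists_label (Cardinal.infinite_iff.mp hG)
  obtain ⟨Φ, hΦ⟩ := Equiv.Perm.exists_hom_lift idx fun y => (Cardinal.eq.mp (hfib y)).some
  choose σ hσ using exists_perm_translate_of_minimal hWconj hmin idx hidx
  refine ⟨fun g => Φ (σ g), fun g h => ?_, ?_⟩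
  · obtain ⟨q, hq, hgq⟩ := hσ g (idx h)
    exact mul_inv_mem_of_idx_eq hWinv hWconj hWU hidx (by rw [hΦ, hgq]) hq.symm
  · exact (Set.finite_range Φ).subset
      ((Subgroup.closure_le Φ.range).mpr (Set.range_comp_subset_range σ Φ))
end

section
/- Let G be a topological group such that for every identity neighborhood U there exists α : G → Sym(G) with α(g)(h) ∈ U g h for all g, h ∈ G and with the subgroup generated by the image of α finite. Then G is precompact. -/
open Pointwise Topology

theorem precompactGroup_of_exists_finite_mul_inv_mem {G : Type*} [Group G] [TopologicalSpace G]
    [IsTopologicalGroup G]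
    (h : ∀ U ∈ 𝓝 (1 : G), ∃ F : Set G, F.Finite ∧ ∀ x, ∃ y ∈ F, y * x⁻¹ ∈ U) :
    PrecompactGroup G := by
  intro U hU
  obtain ⟨F, hF, hcover⟩ := h U⁻¹ (inv_mem_nhds_one G hU)
  refine ⟨hF.toFinset, fun x => ?_⟩
  obtain ⟨y, hyF, hyx⟩ := hcover x
  exact ⟨(y * x⁻¹)⁻¹, hyx, y, hF.mem_toFinset.2 hyF, by group⟩

/-- If for every identity neighborhood `U` there is `α : G → Sym(G)` with `α(g)(h) ∈ Ugh`
for all `g, h` whose image generates a finite subgroup, then `G` is precompact. -/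
theorem stmt_16 (G : Type*) [Group G] [TopologicalSpace G] [IsTopologicalGroup G]
    (h : ∀ U ∈ nhds (1 : G), ∃ α : G → Equiv.Perm G,
      (∀ g h : G, α g h * (g * h)⁻¹ ∈ U) ∧
      Set.Finite ((Subgroup.closure (Set.range α) : Subgroup (Equiv.Perm G)) : Set (Equiv.Perm G))) :
    PrecompactGroup G := by
  refine precompactGroup_of_exists_finite_mul_inv_mem fun U hU => ?_
  obtain ⟨α, hα, hfin⟩ := h U hU
  have hrange : (Set.range α).Finite := hfin.subset Subgroup.subset_closure
  refine ⟨(fun σ : Equiv.Perm G => σ 1) '' Set.range α, hrange.image _, fun x => ?_⟩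
  exact ⟨α x 1, ⟨α x, Set.mem_range_self x, rfl⟩, by simpa using hα x 1⟩
end
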